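/- arXiv:1310.5364 — 5 statements merged into one kernel-verified Lean document; each statement's English description precedes it below -/
import Mathlib

section
/- Suppose the family Υ_n is admissible relative to the sets Ω(n,m) for G ↷ (X,ν). For each m there exists a constant C₁(m) > 0, independent of n, such that for all n > N(m) and all f ∈ L¹(ν×θ), the function W_{n,m}f lies in L¹(ν×θ) and ‖W_{n,m}f‖_{L¹(ν×θ)} ≤ C₁(m)‖f‖_{L¹(ν×θ)}. -/
open MeasureTheory Filter Metric Set
open scoped ENNReal

namespace StableRatio

variable {G : Type*} [Group G] [Countable G]

/-- The Radon–Nikodym derivative `d(ν∘g)/dν`, where `(ν∘g)(A) = ν(gA)`,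
so that `ν∘g` is the pushforward of `ν` under the action of `g⁻¹`. -/
noncomputable def RN {Z : Type*} [MeasurableSpace Z] (act : G → Z → Z) (ν : Measure Z)
    (g : G) (z : Z) : ℝ :=
  ((ν.map (act g⁻¹)).rnDeriv ν z).toReal

/-- `R(g,η) = log (d(ν∘g)/dν)(η)`. -/
noncomputable def Rlog {Z : Type*} [MeasurableSpace Z] (act : G → Z → Z) (ν : Measure Z)
    (g : G) (z : Z) : ℝ :=
  Real.log (RN act ν g z)

/-- A family of functions `Υ n : G → Z → Z → ℝ` is admissible relative to a family of
closed subsets `Ω n m ⊆ Z`, with constants `D C : ℕ → ℝ`, `N : ℕ → ℕ` and moduli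
`fbd : ℕ → ℕ → ℝ`.  Here `dZ` is the metric on `Z` and `act` the (quasi-invariant)
action of `G` on `(Z,ν)`. -/
structure IsRelAdmissible {Z : Type*} [MeasurableSpace Z] [TopologicalSpace Z]
    (act : G → Z → Z) (dZ : Z → Z → ℝ) (ν : Measure Z) [SFinite ν]
    (Υ : ℕ → G → Z → Z → ℝ) (Ω : ℕ → ℕ → Set Z)
    (D C : ℕ → ℝ) (N : ℕ → ℕ) (fbd : ℕ → ℕ → ℝ) : Prop where
  meas_Υ : ∀ (n : ℕ) (g : G), Measurable (Function.uncurry (Υ n g))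
  nonneg_Υ : ∀ (n : ℕ) (g : G) (b b' : Z), 0 ≤ Υ n g b b'
  closed_Ω : ∀ n m : ℕ, IsClosed (Ω n m)
  D_pos : ∀ m : ℕ, 0 < D m
  D_lim : Tendsto D atTop (nhds 0)
  Ω_big : ∀ n m : ℕ, ENNReal.ofReal (1 - D m) < ν (Ω n m)
  f_lim : ∀ m : ℕ, Tendsto (fbd m) atTop (nhds 0)
  close : ∀ (n m : ℕ) (g : G) (b b' : Z), b ∈ Ω n m → 0 < Υ n g b b' →
    dZ b b' < fbd m n ∧ dZ (act g⁻¹ b) (act g⁻¹ b') < fbd m n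
  C_pos : ∀ m : ℕ, 0 < C m
  N_pos : ∀ m : ℕ, 0 < N m
  R_bound : ∀ (m n : ℕ), N m < n → ∀ g : G, ∀ᵐ p ∂(ν.prod ν),
    p.1 ∈ Ω n m → 0 < Υ n g p.1 p.2 →
      (|Rlog act ν g⁻¹ p.1| + |Rlog act ν g⁻¹ p.2| < C m ∧
        1 / C m ≤ |Rlog act ν g⁻¹ p.1 - Rlog act ν g⁻¹ p.2|)
  normalized : ∀ (n : ℕ) (b : Z),
    (∑' g : G, ∫⁻ b', ENNReal.ofReal (Υ n g b b') ∂ν) = 1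
  bdd₁ : ∀ (m n : ℕ), N m < n → ∀ᵐ b' ∂ν,
    (∫⁻ b in Ω n m, ∑' g : G, ENNReal.ofReal (Υ n g b b') ∂ν) ≤ ENNReal.ofReal (C m)
  bdd₂ : ∀ (m n : ℕ), N m < n → ∀ᵐ b' ∂ν,
    (∫⁻ b in Ω n m, ∑' g : G, ENNReal.ofReal (Υ n g b (act g b') * RN act ν g b') ∂ν)
      ≤ ENNReal.ofReal (C m)
  bdd₃ : ∀ (m n : ℕ), N m < n → ∀ᵐ b ∂ν,
    (∫⁻ b', ∑' g : G, Set.indicator (Ω n m) (fun _ => (1 : ℝ≥0∞)) (act g b)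
        * ENNReal.ofReal (Υ n g (act g b) b' * RN act ν g b') ∂ν) ≤ ENNReal.ofReal (C m)

/-- The measure `θ` on `ℝ` with `dθ = (1/2) e^{-|t|} dt`. -/
noncomputable def theta : Measure ℝ :=
  MeasureTheory.volume.withDensity (fun t : ℝ => ENNReal.ofReal ((1 / 2) * Real.exp (-|t|)))

instance : SFinite theta := by unfold theta; infer_instance

/-- The measure `ζ_{n,m}` on `ℝ`:
`ζ_{n,m}(E) = Σ_{g∈G} ∫∫ 1_E(R(g⁻¹,b') − R(g⁻¹,b)) 1_{Ω(n,m)}(b) Υ_n(g,b,b') dν(b) dν(b')`. -/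
noncomputable def zeta {Z : Type*} [MeasurableSpace Z] (act : G → Z → Z) (ν : Measure Z)
    [SFinite ν] (Υ : ℕ → G → Z → Z → ℝ) (Ω : ℕ → ℕ → Set Z) (n m : ℕ) : Measure ℝ :=
  Measure.sum fun g : G =>
    ((ν.prod ν).withDensity fun p =>
        Set.indicator (Ω n m) (fun _ => (1 : ℝ≥0∞)) p.1 * ENNReal.ofReal (Υ n g p.1 p.2)).map
      fun p => Rlog act ν g⁻¹ p.2 - Rlog act ν g⁻¹ p.1

/-- The measure `ζ_{n,b}` on `ℝ`:
`ζ_{n,b}(E) = Σ_{g∈G} ∫ 1_E(R(g⁻¹,b') − R(g⁻¹,b)) Υ_n(g,b,b') dν(b')`. -/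
noncomputable def zetaB {Z : Type*} [MeasurableSpace Z] (act : G → Z → Z) (ν : Measure Z)
    (Υ : ℕ → G → Z → Z → ℝ) (n : ℕ) (b : Z) : Measure ℝ :=
  Measure.sum fun g : G =>
    (ν.withDensity fun b' => ENNReal.ofReal (Υ n g b b')).map
      fun b' => Rlog act ν g⁻¹ b' - Rlog act ν g⁻¹ b

/-- `μ` is a weak-* limit point of the sequence `μs`, i.e. the limit of some subsequence
in the weak-* topology (integration against bounded continuous functions). -/
def WeakStarLimitPoint (μs : ℕ → Measure ℝ) (μ : Measure ℝ) : Prop :=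
  ∃ φ : ℕ → ℕ, StrictMono φ ∧
    ∀ f : BoundedContinuousFunction ℝ ℝ,
      Tendsto (fun k => ∫ x, f x ∂(μs (φ k))) atTop (nhds (∫ x, f x ∂μ))

/-- `T` belongs to the (topological) support of the measure `μ` on `ℝ`. -/
def MemSupport (μ : Measure ℝ) (T : ℝ) : Prop :=
  ∀ ε : ℝ, 0 < ε → 0 < μ (Metric.ball T ε)

/-- `r` belongs to the ratio set of the action `act` of `G` on `(Z,μ)`. -/
def InRatioSet {Z : Type*} [MeasurableSpace Z] (act : G → Z → Z) (μ : Measure Z)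
    (r : ℝ) : Prop :=
  ∀ A : Set Z, MeasurableSet A → 0 < μ A → ∀ ε : ℝ, 0 < ε →
    ∃ A' : Set Z, MeasurableSet A' ∧ A' ⊆ A ∧ 0 < μ A' ∧
      ∃ g : G, g ≠ 1 ∧ act g '' A' ⊆ A ∧ ∀ b ∈ A', |RN act μ g b - r| ≤ ε

/-- `r` belongs to the stable ratio set of the action `act` of `G` on `(Z,ν)`:
`r` is in the ratio set of the product of the action with every probability
measure preserving action of `G`. -/
def InStableRatioSet {Z : Type*} [MeasurableSpace Z] (act : G → Z → Z) (ν : Measure Z)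
    [SFinite ν] (r : ℝ) : Prop :=
  ∀ (Y : Type) [MeasurableSpace Y] (κ : Measure Y) [IsProbabilityMeasure κ]
    (aY : G → Y → Y),
    (∀ g : G, Measurable (aY g)) → aY 1 = id →
    (∀ g h : G, aY (g * h) = aY g ∘ aY h) →
    (∀ g : G, κ.map (aY g) = κ) →
    InRatioSet (fun g (p : Z × Y) => (act g p.1, aY g p.2)) (ν.prod κ) r

/-- The operator `W_{n,m}`. -/
noncomputable def Wop {Z : Type*} [MeasurableSpace Z] (ν : Measure Z)
    (Υ : ℕ → G → Z → Z → ℝ) (Ω : ℕ → ℕ → Set Z) (n m : ℕ)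
    (f : Z → ℝ → ℝ) (b : Z) (t : ℝ) : ℝ :=
  ∑' g : G, ∫ b', Set.indicator (Ω n m) (fun _ => (1 : ℝ)) b * Υ n g b b' * f b' t ∂ν

/-- The operator `X_{n,m}`. -/
noncomputable def Xop {Z : Type*} [MeasurableSpace Z] (act : G → Z → Z) (ν : Measure Z)
    (Υ : ℕ → G → Z → Z → ℝ) (Ω : ℕ → ℕ → Set Z) (n m : ℕ)
    (f : Z → ℝ → ℝ) (b : Z) (t : ℝ) : ℝ :=
  ∑' g : G, ∫ b', Set.indicator (Ω n m) (fun _ => (1 : ℝ)) b * Υ n g b b' *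
      f (act g⁻¹ b') (t + Rlog act ν g⁻¹ b') ∂ν

/-- The operator `Y_{n,m}`. -/
noncomputable def Yop {Z : Type*} [MeasurableSpace Z] (act : G → Z → Z) (ν : Measure Z)
    (Υ : ℕ → G → Z → Z → ℝ) (Ω : ℕ → ℕ → Set Z) (n m : ℕ)
    (f : Z → ℝ → ℝ) (b : Z) (t : ℝ) : ℝ :=
  ∑' g : G, ∫ b', Set.indicator (Ω n m) (fun _ => (1 : ℝ)) b * Υ n g b b' *
      f (act g⁻¹ b) (t + Rlog act ν g⁻¹ b') ∂ν

/-- The operator `L_{n,m}`. -/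
noncomputable def Lop {Z : Type*} [MeasurableSpace Z] (act : G → Z → Z) (ν : Measure Z)
    (Υ : ℕ → G → Z → Z → ℝ) (Ω : ℕ → ℕ → Set Z) (n m : ℕ)
    (f : Z → ℝ → ℝ) (b : Z) (t : ℝ) : ℝ :=
  ∑' g : G, ∫ b', Set.indicator (Ω n m) (fun _ => (1 : ℝ)) b * Υ n g b b' *
      f b (t + Rlog act ν g⁻¹ b' - Rlog act ν g⁻¹ b) ∂ν


section Aux

variable {X : Type*} [MeasurableSpace X]

lemma ofReal_ind_mul (S : Set X) (b : X) (u x : ℝ) (hu : 0 ≤ u) :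
    ENNReal.ofReal (Set.indicator S (fun _ => (1:ℝ)) b * u * x)
      = Set.indicator S (fun _ => (1:ℝ≥0∞)) b * ENNReal.ofReal u * ENNReal.ofReal x := by
  by_cases hb : b ∈ S
  · simp [Set.indicator_of_mem hb, ENNReal.ofReal_mul hu]
  · simp [Set.indicator_of_notMem hb]

/-- `ℝ≥0∞`-valued analogue of the operator `W`. -/
noncomputable def WEop {G : Type*} [Countable G] (ν : Measure X) (Υg : G → X → X → ℝ)
    (S : Set X) (h : X × ℝ → ℝ≥0∞) (b : X) (t : ℝ) : ℝ≥0∞ :=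
  ∑' g : G, ∫⁻ b', Set.indicator S (fun _ => (1:ℝ≥0∞)) b * ENNReal.ofReal (Υg g b b')
      * h (b', t) ∂ν

lemma WEop_mono {G : Type*} [Countable G] (ν : Measure X) (Υg : G → X → X → ℝ)
    (S : Set X) {h h' : X × ℝ → ℝ≥0∞} (hh : ∀ p, h p ≤ h' p) (b : X) (t : ℝ) :
    WEop ν Υg S h b t ≤ WEop ν Υg S h' b t := by
  refine ENNReal.tsum_le_tsum fun g => lintegral_mono fun b' => ?_
  exact mul_le_mul_right (hh _) _

lemma WEop_measurable {G : Type*} [Countable G] (ν : Measure X) [SFinite ν]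
    (Υg : G → X → X → ℝ) (hΥ : ∀ g, Measurable (Function.uncurry (Υg g)))
    (S : Set X) (hS : MeasurableSet S) {h : X × ℝ → ℝ≥0∞} (hh : Measurable h) :
    Measurable (fun p : X × ℝ => WEop ν Υg S h p.1 p.2) := by
  have hind : Measurable (Set.indicator S (fun _ => (1:ℝ≥0∞))) :=
    measurable_const.indicator hS
  apply Measurable.ennreal_tsum
  intro g
  have hk : Measurable (fun q : (X × ℝ) × X =>
      Set.indicator S (fun _ => (1:ℝ≥0∞)) q.1.1 * ENNReal.ofReal (Υg g q.1.1 q.2)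
        * h (q.2, q.1.2)) := by
    refine ((hind.comp (measurable_fst.comp measurable_fst)).mul
      (ENNReal.measurable_ofReal.comp ((hΥ g).comp
        ((measurable_fst.comp measurable_fst).prodMk measurable_snd)))).mul
      (hh.comp (measurable_snd.prodMk (measurable_snd.comp measurable_fst)))
  exact hk.lintegral_prod_right'

/-- Tonelli bound at a fixed time `t`. -/
lemma WEop_fixed_le {G : Type*} [Countable G] (ν : Measure X) [SFinite ν]
    (Υg : G → X → X → ℝ) (hΥ : ∀ g, Measurable (Function.uncurry (Υg g)))
    (hΥ0 : ∀ g b b', 0 ≤ Υg g b b')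
    (S : Set X) (hS : MeasurableSet S) (c : ℝ)
    (hbdd : ∀ᵐ b' ∂ν, (∫⁻ b in S, ∑' g : G, ENNReal.ofReal (Υg g b b') ∂ν)
      ≤ ENNReal.ofReal c)
    {w : X → ℝ≥0∞} (hw : Measurable w) :
    (∫⁻ b, ∑' g : G, ∫⁻ b', Set.indicator S (fun _ => (1:ℝ≥0∞)) b
        * ENNReal.ofReal (Υg g b b') * w b' ∂ν ∂ν)
      ≤ ENNReal.ofReal c * ∫⁻ b', w b' ∂ν := by
  have hind : Measurable (Set.indicator S (fun _ => (1:ℝ≥0∞))) :=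
    measurable_const.indicator hS
  have hk : ∀ g : G, Measurable (fun q : X × X =>
      Set.indicator S (fun _ => (1:ℝ≥0∞)) q.1 * ENNReal.ofReal (Υg g q.1 q.2) * w q.2) := by
    intro g
    exact ((hind.comp measurable_fst).mul
      (ENNReal.measurable_ofReal.comp (hΥ g))).mul (hw.comp measurable_snd)
  have step1 : (∫⁻ b, ∑' g : G, ∫⁻ b', Set.indicator S (fun _ => (1:ℝ≥0∞)) b
        * ENNReal.ofReal (Υg g b b') * w b' ∂ν ∂ν)
      = ∑' g : G, ∫⁻ b, ∫⁻ b', Set.indicator S (fun _ => (1:ℝ≥0∞)) b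
        * ENNReal.ofReal (Υg g b b') * w b' ∂ν ∂ν :=
    lintegral_tsum fun g => ((hk g).lintegral_prod_right').aemeasurable
  have step2 : ∀ g : G, (∫⁻ b, ∫⁻ b', Set.indicator S (fun _ => (1:ℝ≥0∞)) b
        * ENNReal.ofReal (Υg g b b') * w b' ∂ν ∂ν)
      = ∫⁻ b', ∫⁻ b, Set.indicator S (fun _ => (1:ℝ≥0∞)) b
        * ENNReal.ofReal (Υg g b b') * w b' ∂ν ∂ν := by
    intro g
    exact lintegral_lintegral_swap (hk g).aemeasurable
  have hinner : ∀ g : G, Measurable (fun b' : X => ∫⁻ b, Set.indicator S (fun _ => (1:ℝ≥0∞)) b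
      * ENNReal.ofReal (Υg g b b') * w b' ∂ν) := by
    intro g
    have : Measurable (fun q : X × X =>
        Set.indicator S (fun _ => (1:ℝ≥0∞)) q.2 * ENNReal.ofReal (Υg g q.2 q.1) * w q.1) :=
      ((hind.comp measurable_snd).mul
        (ENNReal.measurable_ofReal.comp ((hΥ g).comp
          (measurable_snd.prodMk measurable_fst)))).mul (hw.comp measurable_fst)
    exact this.lintegral_prod_right'
  have step3 : (∑' g : G, ∫⁻ b', ∫⁻ b, Set.indicator S (fun _ => (1:ℝ≥0∞)) b
        * ENNReal.ofReal (Υg g b b') * w b' ∂ν ∂ν)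
      = ∫⁻ b', ∑' g : G, ∫⁻ b, Set.indicator S (fun _ => (1:ℝ≥0∞)) b
        * ENNReal.ofReal (Υg g b b') * w b' ∂ν ∂ν :=
    (lintegral_tsum fun g => (hinner g).aemeasurable).symm
  have step4 : ∀ b' : X, (∑' g : G, ∫⁻ b, Set.indicator S (fun _ => (1:ℝ≥0∞)) b
        * ENNReal.ofReal (Υg g b b') * w b' ∂ν)
      = w b' * ∫⁻ b in S, ∑' g : G, ENNReal.ofReal (Υg g b b') ∂ν := by
    intro b'
    have hm : ∀ g : G, Measurable (fun b : X => Set.indicator S (fun _ => (1:ℝ≥0∞)) b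
        * ENNReal.ofReal (Υg g b b')) := fun g => by
      exact hind.mul (ENNReal.measurable_ofReal.comp
        ((hΥ g).comp (measurable_id.prodMk measurable_const)))
    have e1 : ∀ g : G, (∫⁻ b, Set.indicator S (fun _ => (1:ℝ≥0∞)) b
          * ENNReal.ofReal (Υg g b b') * w b' ∂ν)
        = w b' * ∫⁻ b, Set.indicator S (fun _ => (1:ℝ≥0∞)) b
          * ENNReal.ofReal (Υg g b b') ∂ν := by
      intro g
      rw [← lintegral_const_mul _ (hm g)]
      congr 1
      ext b
      ring
    simp_rw [e1]
    rw [ENNReal.tsum_mul_left]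
    congr 1
    rw [← lintegral_tsum (fun g => (hm g).aemeasurable)]
    rw [← lintegral_indicator hS]
    congr 1
    ext b
    rw [ENNReal.tsum_mul_left]
    by_cases hb : b ∈ S
    · simp [Set.indicator_of_mem hb]
    · simp [Set.indicator_of_notMem hb]
  calc (∫⁻ b, ∑' g : G, ∫⁻ b', Set.indicator S (fun _ => (1:ℝ≥0∞)) b
        * ENNReal.ofReal (Υg g b b') * w b' ∂ν ∂ν)
      = ∫⁻ b', w b' * ∫⁻ b in S, ∑' g : G, ENNReal.ofReal (Υg g b b') ∂ν ∂ν := by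
        rw [step1]; simp_rw [step2]; rw [step3]; exact lintegral_congr step4
    _ ≤ ∫⁻ b', w b' * ENNReal.ofReal c ∂ν := by
        refine lintegral_mono_ae (hbdd.mono fun b' hb' => ?_)
        exact mul_le_mul_right hb' _
    _ = ENNReal.ofReal c * ∫⁻ b', w b' ∂ν := by
        rw [lintegral_mul_const _ hw, mul_comm]

end Aux

theorem stmt2 {G X : Type*} [Group G] [Countable G]
    [MetricSpace X] [CompactSpace X] [MeasurableSpace X] [BorelSpace X]
    (act : G → X → X) (hact_one : act 1 = id)
    (hact_mul : ∀ g h : G, act (g * h) = act g ∘ act h)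
    (hact_meas : ∀ g : G, Measurable (act g))
    (ν : Measure X) [IsProbabilityMeasure ν]
    (hqi : ∀ g : G, ν.map (act g) ≪ ν ∧ ν ≪ ν.map (act g))
    (Υ : ℕ → G → X → X → ℝ) (Ω : ℕ → ℕ → Set X)
    (D C : ℕ → ℝ) (N : ℕ → ℕ) (fbd : ℕ → ℕ → ℝ)
    (hadm : IsRelAdmissible act (fun a b : X => dist a b) ν Υ Ω D C N fbd) :
    ∀ m : ℕ, ∃ C₁ : ℝ, 0 < C₁ ∧ ∀ n : ℕ, N m < n → ∀ f : X × ℝ → ℝ,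
      Integrable f (ν.prod theta) →
      Integrable (fun p : X × ℝ => Wop ν Υ Ω n m (Function.curry f) p.1 p.2) (ν.prod theta) ∧
        ∫ p, |Wop ν Υ Ω n m (Function.curry f) p.1 p.2| ∂(ν.prod theta)
          ≤ C₁ * ∫ p, |f p| ∂(ν.prod theta) := by
  intro m
  refine ⟨C m, hadm.C_pos m, ?_⟩
  intro n hn f hf
  have hSm : MeasurableSet (Ω n m) := (hadm.closed_Ω n m).measurableSet
  set μ := ν.prod theta with hμdef
  obtain ⟨hfm, hfi⟩ := hf
  set F := hfm.mk f with hFdef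
  have hFsm : StronglyMeasurable F := hfm.stronglyMeasurable_mk
  have hFae : f =ᵐ[μ] F := hfm.ae_eq_mk
  have hFm : Measurable F := hFsm.measurable
  set P : X × ℝ → ℝ≥0∞ := fun p => ENNReal.ofReal (F p) with hPdef
  set Q : X × ℝ → ℝ≥0∞ := fun p => ENNReal.ofReal (-F p) with hQdef
  set A : X × ℝ → ℝ≥0∞ := fun p => ENNReal.ofReal |F p| with hAdef
  have hPm : Measurable P := ENNReal.measurable_ofReal.comp hFm
  have hQm : Measurable Q := ENNReal.measurable_ofReal.comp hFm.neg
  have hAm : Measurable A := ENNReal.measurable_ofReal.comp hFm.abs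
  have hPle : ∀ p, P p ≤ A p := fun p => ENNReal.ofReal_le_ofReal (le_abs_self _)
  have hQle : ∀ p, Q p ≤ A p := fun p => ENNReal.ofReal_le_ofReal
    (by rw [← abs_neg]; exact le_abs_self _)
  -- the main Tonelli bound
  have WEb : ∀ h : X × ℝ → ℝ≥0∞, Measurable h →
      (∫⁻ p, WEop ν (fun g => Υ n g) (Ω n m) h p.1 p.2 ∂μ)
        ≤ ENNReal.ofReal (C m) * ∫⁻ p, h p ∂μ := by
    intro h hh
    have hWm := WEop_measurable ν (fun g => Υ n g) (fun g => hadm.meas_Υ n g) (Ω n m) hSm hh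
    rw [hμdef, lintegral_prod_symm _ hWm.aemeasurable, lintegral_prod_symm _ hh.aemeasurable]
    have hmt : Measurable (fun t : ℝ => ∫⁻ b', h (b', t) ∂ν) :=
      (hh.comp measurable_swap).lintegral_prod_right'
    rw [← lintegral_const_mul _ hmt]
    refine lintegral_mono fun t => ?_
    exact WEop_fixed_le ν (fun g => Υ n g) (fun g => hadm.meas_Υ n g)
      (fun g b b' => hadm.nonneg_Υ n g b b') (Ω n m) hSm (C m) (hadm.bdd₁ m n hn)
      (hh.comp (measurable_id.prodMk measurable_const))
  have hAfin : (∫⁻ p, A p ∂μ) < ∞ := by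
    have h1 : (∫⁻ p, A p ∂μ) = ∫⁻ p, ENNReal.ofReal ‖f p‖ ∂μ := by
      refine lintegral_congr_ae (hFae.mono fun p hp => ?_)
      simp [hAdef, hp, Real.norm_eq_abs]
    rw [h1]
    exact (hasFiniteIntegral_iff_norm f).mp hfi
  have hWAfin : (∫⁻ p, WEop ν (fun g => Υ n g) (Ω n m) A p.1 p.2 ∂μ) < ∞ :=
    lt_of_le_of_lt (WEb A hAm) (ENNReal.mul_lt_top ENNReal.ofReal_lt_top hAfin)
  have hWAm : Measurable (fun p : X × ℝ => WEop ν (fun g => Υ n g) (Ω n m) A p.1 p.2) :=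
    WEop_measurable ν _ (fun g => hadm.meas_Υ n g) _ hSm hAm
  have haefin : ∀ᵐ p ∂μ, WEop ν (fun g => Υ n g) (Ω n m) A p.1 p.2 < ∞ :=
    ae_lt_top hWAm hWAfin.ne
  -- a.e. slice equality
  have hslice : ∀ᵐ p ∂μ, ∀ᵐ b' ∂ν, f (b', p.2) = F (b', p.2) := by
    have h1 : ∀ᵐ q : ℝ × X ∂(theta.prod ν), f (q.2, q.1) = F (q.2, q.1) := by
      have := (Measure.measurePreserving_swap (μ := theta)
        (ν := ν)).quasiMeasurePreserving.tendsto_ae.eventually hFae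
      exact this
    have h2 : ∀ᵐ t ∂theta, ∀ᵐ b' ∂ν, f (b', t) = F (b', t) := Measure.ae_ae_of_ae_prod h1
    have hsnd : Measure.QuasiMeasurePreserving (Prod.snd : X × ℝ → ℝ) μ theta := by
      refine ⟨measurable_snd, ?_⟩
      have hmap : Measure.map (Prod.snd : X × ℝ → ℝ) μ = theta := by
        rw [hμdef, Measure.map_snd_prod]
        simp
      rw [hmap]
    exact hsnd.tendsto_ae.eventually h2
  set Wm : X × ℝ → ℝ := fun p => (WEop ν (fun g => Υ n g) (Ω n m) P p.1 p.2).toReal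
      - (WEop ν (fun g => Υ n g) (Ω n m) Q p.1 p.2).toReal with hWmdef
  -- main pointwise identity
  have hmain : (fun p : X × ℝ => Wop ν Υ Ω n m (Function.curry f) p.1 p.2) =ᵐ[μ] Wm := by
    filter_upwards [haefin, hslice] with p hfin hsl
    have hΥ0 : ∀ (g : G) (b' : X), 0 ≤ Υ n g p.1 b' := fun g b' => hadm.nonneg_Υ n g p.1 b'
    set IP : G → ℝ≥0∞ := fun g => ∫⁻ b', Set.indicator (Ω n m) (fun _ => (1:ℝ≥0∞)) p.1
        * ENNReal.ofReal (Υ n g p.1 b') * P (b', p.2) ∂ν with hIPdef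
    set IQ : G → ℝ≥0∞ := fun g => ∫⁻ b', Set.indicator (Ω n m) (fun _ => (1:ℝ≥0∞)) p.1
        * ENNReal.ofReal (Υ n g p.1 b') * Q (b', p.2) ∂ν with hIQdef
    set IA : G → ℝ≥0∞ := fun g => ∫⁻ b', Set.indicator (Ω n m) (fun _ => (1:ℝ≥0∞)) p.1
        * ENNReal.ofReal (Υ n g p.1 b') * A (b', p.2) ∂ν with hIAdef
    have hWA : (∑' g : G, IA g) < ∞ := hfin
    have hIAfin : ∀ g : G, IA g ≠ ∞ := fun g => (lt_of_le_of_lt (ENNReal.le_tsum g) hWA).ne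
    have hIPA : ∀ g : G, IP g ≤ IA g :=
      fun g => lintegral_mono fun b' => mul_le_mul_right (hPle _) _
    have hIQA : ∀ g : G, IQ g ≤ IA g :=
      fun g => lintegral_mono fun b' => mul_le_mul_right (hQle _) _
    have hIPfin : ∀ g : G, IP g ≠ ∞ := fun g => (lt_of_le_of_lt (hIPA g) (hIAfin g).lt_top).ne
    have hIQfin : ∀ g : G, IQ g ≠ ∞ := fun g => (lt_of_le_of_lt (hIQA g) (hIAfin g).lt_top).ne
    have hv : ∀ g : G,
        (∫ b', Set.indicator (Ω n m) (fun _ => (1:ℝ)) p.1 * Υ n g p.1 b' * F (b', p.2) ∂ν)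
          = (IP g).toReal - (IQ g).toReal := by
      intro g
      have hvm : Measurable (fun b' : X =>
          Set.indicator (Ω n m) (fun _ => (1:ℝ)) p.1 * Υ n g p.1 b' * F (b', p.2)) := by
        exact (measurable_const.mul ((hadm.meas_Υ n g).comp
          (measurable_const.prodMk measurable_id))).mul
          (hFm.comp (measurable_id.prodMk measurable_const))
      have hofP : ∀ b' : X, ENNReal.ofReal
          (Set.indicator (Ω n m) (fun _ => (1:ℝ)) p.1 * Υ n g p.1 b' * F (b', p.2))
            = Set.indicator (Ω n m) (fun _ => (1:ℝ≥0∞)) p.1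
              * ENNReal.ofReal (Υ n g p.1 b') * P (b', p.2) :=
        fun b' => ofReal_ind_mul _ _ _ _ (hΥ0 g b')
      have hofQ : ∀ b' : X, ENNReal.ofReal
          (-(Set.indicator (Ω n m) (fun _ => (1:ℝ)) p.1 * Υ n g p.1 b' * F (b', p.2)))
            = Set.indicator (Ω n m) (fun _ => (1:ℝ≥0∞)) p.1
              * ENNReal.ofReal (Υ n g p.1 b') * Q (b', p.2) := by
        intro b'
        rw [neg_mul_eq_mul_neg]
        exact ofReal_ind_mul _ _ _ _ (hΥ0 g b')
      have hofA : ∀ b' : X, ENNReal.ofReal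
          (|Set.indicator (Ω n m) (fun _ => (1:ℝ)) p.1 * Υ n g p.1 b' * F (b', p.2)|)
            = Set.indicator (Ω n m) (fun _ => (1:ℝ≥0∞)) p.1
              * ENNReal.ofReal (Υ n g p.1 b') * A (b', p.2) := by
        intro b'
        rw [abs_mul, abs_mul, abs_of_nonneg (hΥ0 g b'),
          abs_of_nonneg (Set.indicator_nonneg (fun _ _ => zero_le_one) p.1)]
        exact ofReal_ind_mul _ _ _ _ (hΥ0 g b')
      have hint : Integrable (fun b' : X =>
          Set.indicator (Ω n m) (fun _ => (1:ℝ)) p.1 * Υ n g p.1 b' * F (b', p.2)) ν := by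
        refine ⟨hvm.aestronglyMeasurable, ?_⟩
        rw [hasFiniteIntegral_iff_norm]
        have heq : (∫⁻ b', ENNReal.ofReal
            ‖Set.indicator (Ω n m) (fun _ => (1:ℝ)) p.1 * Υ n g p.1 b' * F (b', p.2)‖ ∂ν)
              = IA g := by
          simp only [hIAdef]
          refine lintegral_congr fun b' => ?_
          rw [Real.norm_eq_abs]
          exact hofA b'
        rw [heq]
        exact (hIAfin g).lt_top
      rw [integral_eq_lintegral_pos_part_sub_lintegral_neg_part hint]
      congr 1
      · congr 1
        simp only [hIPdef]
        exact lintegral_congr fun b' => hofP b'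
      · congr 1
        simp only [hIQdef]
        exact lintegral_congr fun b' => hofQ b'
    have hintf : ∀ g : G,
        (∫ b', Set.indicator (Ω n m) (fun _ => (1:ℝ)) p.1 * Υ n g p.1 b' * f (b', p.2) ∂ν)
          = (IP g).toReal - (IQ g).toReal := by
      intro g
      rw [← hv g]
      refine integral_congr_ae (hsl.mono fun b' hb' => ?_)
      simp only [hb']
    have hsumP : Summable fun g : G => (IP g).toReal :=
      ENNReal.summable_toReal (lt_of_le_of_lt (ENNReal.tsum_le_tsum hIPA) hWA).ne
    have hsumQ : Summable fun g : G => (IQ g).toReal :=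
      ENNReal.summable_toReal (lt_of_le_of_lt (ENNReal.tsum_le_tsum hIQA) hWA).ne
    have e1 : (WEop ν (fun g => Υ n g) (Ω n m) P p.1 p.2).toReal
        = ∑' g : G, (IP g).toReal := by
      rw [show WEop ν (fun g => Υ n g) (Ω n m) P p.1 p.2 = ∑' g : G, IP g from rfl]
      exact ENNReal.tsum_toReal_eq hIPfin
    have e2 : (WEop ν (fun g => Υ n g) (Ω n m) Q p.1 p.2).toReal
        = ∑' g : G, (IQ g).toReal := by
      rw [show WEop ν (fun g => Υ n g) (Ω n m) Q p.1 p.2 = ∑' g : G, IQ g from rfl]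
      exact ENNReal.tsum_toReal_eq hIQfin
    calc Wop ν Υ Ω n m (Function.curry f) p.1 p.2
        = ∑' g : G, ((IP g).toReal - (IQ g).toReal) := tsum_congr hintf
      _ = (∑' g : G, (IP g).toReal) - ∑' g : G, (IQ g).toReal :=
          (hsumP.hasSum.sub hsumQ.hasSum).tsum_eq
      _ = Wm p := by simp only [hWmdef]; rw [e1, e2]
  -- measurability and integrability of the comparison function
  have hWmMeas : Measurable Wm :=
    ((WEop_measurable ν _ (fun g => hadm.meas_Υ n g) _ hSm hPm).ennreal_toReal).sub
      ((WEop_measurable ν _ (fun g => hadm.meas_Υ n g) _ hSm hQm).ennreal_toReal)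
  have habs : ∀ᵐ p ∂μ, |Wm p| ≤ (WEop ν (fun g => Υ n g) (Ω n m) A p.1 p.2).toReal := by
    filter_upwards [haefin] with p hfin
    have h1 := ENNReal.toReal_mono hfin.ne (WEop_mono ν (fun g => Υ n g) (Ω n m) hPle p.1 p.2)
    have h2 := ENNReal.toReal_mono hfin.ne (WEop_mono ν (fun g => Υ n g) (Ω n m) hQle p.1 p.2)
    have h3 : (0:ℝ) ≤ (WEop ν (fun g => Υ n g) (Ω n m) P p.1 p.2).toReal := ENNReal.toReal_nonneg
    have h4 : (0:ℝ) ≤ (WEop ν (fun g => Υ n g) (Ω n m) Q p.1 p.2).toReal := ENNReal.toReal_nonneg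
    simp only [hWmdef]
    rw [abs_le]
    constructor <;> [linarith; linarith]
  have hWmInt : Integrable Wm μ := by
    refine ⟨hWmMeas.aestronglyMeasurable, ?_⟩
    rw [hasFiniteIntegral_iff_norm]
    calc (∫⁻ p, ENNReal.ofReal ‖Wm p‖ ∂μ)
        ≤ ∫⁻ p, WEop ν (fun g => Υ n g) (Ω n m) A p.1 p.2 ∂μ := by
          refine lintegral_mono_ae (habs.mono fun p hp => ?_)
          rw [Real.norm_eq_abs]
          exact le_trans (ENNReal.ofReal_le_ofReal hp) ENNReal.ofReal_toReal_le
      _ < ∞ := hWAfin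
  have hWopInt : Integrable (fun p : X × ℝ => Wop ν Υ Ω n m (Function.curry f) p.1 p.2) μ :=
    hWmInt.congr hmain.symm
  refine ⟨hWopInt, ?_⟩
  have e0 : (∫ p, |Wop ν Υ Ω n m (Function.curry f) p.1 p.2| ∂μ) = ∫ p, |Wm p| ∂μ :=
    integral_congr_ae (hmain.mono fun p hp => by simp only [hp])
  have hgAInt : Integrable (fun p : X × ℝ =>
      (WEop ν (fun g => Υ n g) (Ω n m) A p.1 p.2).toReal) μ :=
    integrable_toReal_of_lintegral_ne_top hWAm.aemeasurable hWAfin.ne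
  have e2 : (∫ p, |Wm p| ∂μ)
      ≤ ∫ p, (WEop ν (fun g => Υ n g) (Ω n m) A p.1 p.2).toReal ∂μ :=
    integral_mono_ae hWmInt.abs hgAInt habs
  have e3 : (∫ p, (WEop ν (fun g => Υ n g) (Ω n m) A p.1 p.2).toReal ∂μ)
      = (∫⁻ p, WEop ν (fun g => Υ n g) (Ω n m) A p.1 p.2 ∂μ).toReal :=
    integral_toReal hWAm.aemeasurable haefin
  have e4 : (∫⁻ p, WEop ν (fun g => Υ n g) (Ω n m) A p.1 p.2 ∂μ).toReal
      ≤ (ENNReal.ofReal (C m) * ∫⁻ p, A p ∂μ).toReal :=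
    ENNReal.toReal_mono (ENNReal.mul_lt_top ENNReal.ofReal_lt_top hAfin).ne (WEb A hAm)
  have e5 : (ENNReal.ofReal (C m) * ∫⁻ p, A p ∂μ).toReal = C m * (∫⁻ p, A p ∂μ).toReal := by
    rw [ENNReal.toReal_mul, ENNReal.toReal_ofReal (hadm.C_pos m).le]
  have e6 : (∫⁻ p, A p ∂μ).toReal = ∫ p, |f p| ∂μ := by
    have h1 : (∫⁻ p, A p ∂μ) = ∫⁻ p, ENNReal.ofReal |f p| ∂μ :=
      lintegral_congr_ae (hFae.mono fun p hp => by simp [hAdef, hp])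
    have habsm : AEStronglyMeasurable (fun p : X × ℝ => |f p|) μ := by
      simpa [Real.norm_eq_abs] using hfm.norm
    have h2 := integral_eq_lintegral_of_nonneg_ae (μ := μ) (f := fun p => |f p|)
      (ae_of_all _ fun p => abs_nonneg _) habsm
    rw [h1, h2]
  rw [e0]
  rw [e6] at e5
  linarith
end StableRatio
end

section
/- Suppose the family Υ_n is admissible relative to the sets Ω(n,m) for G ↷ (X,ν). For each m there exists a constant C₁(m) > 0, independent of n, such that for all n > N(m) and all f ∈ L¹(ν×θ), the function X_{n,m}f lies in L¹(ν×θ) and ‖X_{n,m}f‖_{L¹(ν×θ)} ≤ C₁(m)‖f‖_{L¹(ν×θ)}. -/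
open MeasureTheory Filter Metric Set
open scoped ENNReal

namespace StableRatio

variable {G : Type*} [Group G] [Countable G]

/-!
Bound `|X_{n,m} f|` by the positive kernel with `|f|` in place of `f` and integrate in `t` first:
on the support of `1_Ω(b) Υ_n(g,b,b')` one has `|R(g⁻¹,b')| < C(m)`, so translating `θ` by
`R(g⁻¹,b')` costs at most `e^{C(m)}`. The substitution `b' = g c` then turns the remaining
integral into one against the weight `∫_Ω Σ_g Υ_n(g,b,gc) (d(ν∘g)/dν)(c) dν(b)`, which is at
most `C(m)` by the second bound in (v); so `C₁ = e^{C(m)} C(m)`. Since the maps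
`(b',t) ↦ (g⁻¹b', t + R(g⁻¹,b'))` are nonsingular for `ν × θ`, `X_{n,m} f` only depends on the
class of `f`, so `f` may be assumed measurable.
-/

lemma lintegral_prod_comp_eq_lintegral_rnDeriv_mul {α β : Type*} [MeasurableSpace α]
    [MeasurableSpace β] {μ : Measure α} [SFinite μ] {ν : Measure β} [IsFiniteMeasure ν]
    {S T : β → β} (hS : Measurable S) (hT : Measurable T) (hTS : ∀ x, T (S x) = x)
    (hac : ν.map S ≪ ν) {U : α × β → ℝ≥0∞} (hU : Measurable U) {H : β → ℝ≥0∞}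
    (hH : Measurable H) :
    ∫⁻ z, U z * H (S z.2) ∂(μ.prod ν)
      = ∫⁻ c, (∫⁻ a, U (a, T c) ∂μ) * (ν.map S).rnDeriv ν c * H c ∂ν := by
  have hψ : ∀ a, Measurable fun c => U (a, T c) * H c := fun a => by fun_prop
  calc ∫⁻ z, U z * H (S z.2) ∂(μ.prod ν)
      = ∫⁻ a, ∫⁻ b, U (a, T (S b)) * H (S b) ∂ν ∂μ := by
        simp only [hTS]
        exact lintegral_prod _ (by fun_prop)
    _ = ∫⁻ a, ∫⁻ c, (ν.map S).rnDeriv ν c * (U (a, T c) * H c) ∂ν ∂μ := by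
        refine lintegral_congr fun a => ?_
        rw [lintegral_rnDeriv_mul hac (hψ a).aemeasurable, lintegral_map (hψ a) hS]
    _ = ∫⁻ c, ∫⁻ a, U (a, T c) * ((ν.map S).rnDeriv ν c * H c) ∂μ ∂ν := by
        rw [lintegral_lintegral_swap]
        · simp only [mul_left_comm]
        · have := Measure.measurable_rnDeriv (ν.map S) ν
          exact Measurable.aemeasurable (by fun_prop)
    _ = ∫⁻ c, (∫⁻ a, U (a, T c) ∂μ) * (ν.map S).rnDeriv ν c * H c ∂ν := by
        refine lintegral_congr fun c => ?_
        rw [lintegral_mul_const _ (by fun_prop), mul_assoc]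

lemma theta_absolutelyContinuous_volume : theta ≪ volume :=
  withDensity_absolutelyContinuous _ _

lemma volume_absolutelyContinuous_theta : (volume : Measure ℝ) ≪ theta :=
  withDensity_absolutelyContinuous' (by fun_prop) (ae_of_all _ fun t => by positivity)

lemma lintegral_theta_comp_add_le {h : ℝ → ℝ≥0∞} (hh : Measurable h) (s : ℝ) :
    ∫⁻ t, h (t + s) ∂theta ≤ ENNReal.ofReal (Real.exp |s|) * ∫⁻ t, h t ∂theta := by
  have hdens : Measurable fun t : ℝ => ENNReal.ofReal ((1 / 2) * Real.exp (-|t|)) := by fun_prop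
  rw [theta, lintegral_withDensity_eq_lintegral_mul _ hdens (by fun_prop),
    lintegral_withDensity_eq_lintegral_mul _ hdens hh,
    ← lintegral_const_mul' _ _ ENNReal.ofReal_ne_top, ← lintegral_add_right_eq_self _ (-s)]
  refine lintegral_mono fun u => ?_
  simp only [Pi.mul_apply, neg_add_cancel_right, ← mul_assoc,
    ← ENNReal.ofReal_mul (Real.exp_nonneg _)]
  have hu : -|u + -s| ≤ |s| + -|u| := by
    have := abs_add_le (u + -s) s
    simp only [neg_add_cancel_right] at this
    linarith
  have : 1 / 2 * Real.exp (-|u + -s|) ≤ Real.exp |s| * (1 / 2) * Real.exp (-|u|) := by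
    rw [mul_comm (Real.exp |s|), mul_assoc, ← Real.exp_add]
    gcongr
  gcongr

lemma quasiMeasurePreserving_prodMk_add_theta {α : Type*} [MeasurableSpace α]
    {μ ν : Measure α} [SFinite μ] [SFinite ν] {T : α → α}
    (hT : Measure.QuasiMeasurePreserving T μ ν) {R : α → ℝ} (hR : Measurable R) :
    Measure.QuasiMeasurePreserving (fun p : α × ℝ => (T p.1, p.2 + R p.1))
      (μ.prod theta) (ν.prod theta) := by
  have shear : MeasurePreserving (fun p : α × ℝ => (p.1, p.2 + R p.1))
      (μ.prod volume) (μ.prod volume) :=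
    (MeasurePreserving.id μ).skew_product (by fun_prop)
      (ae_of_all _ fun a => map_add_right_eq_self volume (R a))
  exact ((QuasiMeasurePreserving.prodMap hT (Measure.QuasiMeasurePreserving.id volume)).comp
    shear.quasiMeasurePreserving).mono
    (Measure.AbsolutelyContinuous.rfl.prod theta_absolutelyContinuous_volume)
    (Measure.AbsolutelyContinuous.rfl.prod volume_absolutelyContinuous_theta)

lemma measurable_lintegral_mul_comp_add {α β : Type*} [MeasurableSpace α] [MeasurableSpace β]
    {ν : Measure β} [SFinite ν] {U : α × β → ℝ≥0∞} (hU : Measurable U)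
    {F : β → ℝ → ℝ≥0∞} (hF : Measurable (Function.uncurry F)) {R : β → ℝ} (hR : Measurable R) :
    Measurable fun p : α × ℝ => ∫⁻ b, U (p.1, b) * F b (p.2 + R b) ∂ν := by
  have hFR : Measurable fun q : (α × ℝ) × β => F q.2 (q.1.2 + R q.2) :=
    hF.comp (measurable_snd.prodMk ((measurable_snd.comp measurable_fst).add
      (hR.comp measurable_snd)))
  exact ((hU.comp ((measurable_fst.comp measurable_fst).prodMk measurable_snd)).mul
    hFR).lintegral_prod_right'

lemma lintegral_prod_theta_comp_add_le {α β : Type*} [MeasurableSpace α] [MeasurableSpace β]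
    {μ : Measure α} {ν : Measure β} [SFinite μ] [SFinite ν] {U : α × β → ℝ≥0∞}
    (hU : Measurable U) {F : β → ℝ → ℝ≥0∞} (hF : Measurable (Function.uncurry F))
    {R : β → ℝ} (hR : Measurable R) {c : ℝ}
    (hRc : ∀ᵐ z ∂(μ.prod ν), U z ≠ 0 → |R z.2| ≤ c) :
    ∫⁻ p, ∫⁻ b, U (p.1, b) * F b (p.2 + R b) ∂ν ∂(μ.prod theta)
      ≤ ENNReal.ofReal (Real.exp c) * ∫⁻ z, U z * ∫⁻ t, F z.2 t ∂theta ∂(μ.prod ν) := by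
  have hFs : ∀ b, Measurable (F b) := fun b => hF.of_uncurry_left
  have hFR : Measurable fun q : β × ℝ => F q.1 (q.2 + R q.1) :=
    hF.comp (measurable_fst.prodMk (measurable_snd.add (hR.comp measurable_fst)))
  calc ∫⁻ p, ∫⁻ b, U (p.1, b) * F b (p.2 + R b) ∂ν ∂(μ.prod theta)
      = ∫⁻ a, ∫⁻ b, U (a, b) * ∫⁻ t, F b (t + R b) ∂theta ∂ν ∂μ := by
        rw [lintegral_prod _ (measurable_lintegral_mul_comp_add hU hF hR).aemeasurable]
        refine lintegral_congr fun a => ?_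
        rw [lintegral_lintegral_swap (f := fun t b => U (a, b) * F b (t + R b))
          (Measurable.aemeasurable (by fun_prop))]
        exact lintegral_congr fun b => lintegral_const_mul _ (by fun_prop)
    _ = ∫⁻ z, U z * ∫⁻ t, F z.2 (t + R z.2) ∂theta ∂(μ.prod ν) :=
        (lintegral_prod _
          (hU.mul (hFR.lintegral_prod_right'.comp measurable_snd)).aemeasurable).symm
    _ ≤ ∫⁻ z, ENNReal.ofReal (Real.exp c) * (U z * ∫⁻ t, F z.2 t ∂theta) ∂(μ.prod ν) := by
        refine lintegral_mono_ae ?_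
        filter_upwards [hRc] with z hz
        rcases eq_or_ne (U z) 0 with hUz | hUz
        · simp [hUz]
        calc U z * ∫⁻ t, F z.2 (t + R z.2) ∂theta
            ≤ U z * (ENNReal.ofReal (Real.exp |R z.2|) * ∫⁻ t, F z.2 t ∂theta) := by
              gcongr
              exact lintegral_theta_comp_add_le (hFs z.2) _
          _ ≤ ENNReal.ofReal (Real.exp c) * (U z * ∫⁻ t, F z.2 t ∂theta) := by
              rw [mul_left_comm]
              gcongr
              exact hz hUz
    _ = _ := lintegral_const_mul' _ _ ENNReal.ofReal_ne_top

section Operator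

variable {G : Type*} [Group G] {X : Type*} [MeasurableSpace X]

lemma measurable_Rlog (act : G → X → X) (ν : Measure X) (g : G) : Measurable (Rlog act ν g) :=
  Real.measurable_log.comp (Measure.measurable_rnDeriv _ _).ennreal_toReal

variable {act : G → X → X} {ν : Measure X} {Υ : ℕ → G → X → X → ℝ} {Ω : ℕ → ℕ → Set X}
  {n m : ℕ}

lemma Xop_ae_eq_of_ae_eq [Countable G] [SFinite ν]
    (hqi : ∀ g : G, Measure.QuasiMeasurePreserving (act g) ν ν)
    {f f' : X × ℝ → ℝ} (hff' : f =ᵐ[ν.prod theta] f') :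
    (fun p : X × ℝ => Xop act ν Υ Ω n m (Function.curry f) p.1 p.2)
      =ᵐ[ν.prod theta] fun p => Xop act ν Υ Ω n m (Function.curry f') p.1 p.2 := by
  have hslice : ∀ g : G, ∀ᵐ t ∂theta, ∀ᵐ b' ∂ν,
      f (act g⁻¹ b', t + Rlog act ν g⁻¹ b') = f' (act g⁻¹ b', t + Rlog act ν g⁻¹ b') := by
    intro g
    have hΦ := (quasiMeasurePreserving_prodMk_add_theta (hqi g⁻¹)
      (measurable_Rlog act ν g⁻¹)).comp
      (Measure.measurePreserving_swap (μ := theta) (ν := ν)).quasiMeasurePreserving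
    exact Measure.ae_ae_of_ae_prod (hΦ.ae_eq hff')
  filter_upwards [Measure.quasiMeasurePreserving_snd.ae (ae_all_iff.2 hslice)] with p hp
  refine tsum_congr fun g => integral_congr_ae ?_
  filter_upwards [hp g] with b' hb'
  simp only [Function.curry_apply, hb']

lemma measurable_Xop [Countable G] [SFinite ν] (hact : ∀ g : G, Measurable (act g))
    (hΥ : ∀ g, Measurable (Function.uncurry (Υ n g))) (hΩ : MeasurableSet (Ω n m))
    {f : X × ℝ → ℝ} (hf : Measurable f) :
    Measurable fun p : X × ℝ => Xop act ν Υ Ω n m (Function.curry f) p.1 p.2 := by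
  refine Measurable.tsum fun g => StronglyMeasurable.measurable ?_
  refine StronglyMeasurable.integral_prod_right' (f := fun q : (X × ℝ) × X =>
    (Ω n m).indicator (fun _ => (1 : ℝ)) q.1.1 * Υ n g q.1.1 q.2 *
      f (act g⁻¹ q.2, q.1.2 + Rlog act ν g⁻¹ q.2)) (Measurable.stronglyMeasurable ?_)
  have hΥg := hΥ g
  have hactg := hact g⁻¹
  have hRg := measurable_Rlog act ν g⁻¹
  fun_prop (disch := exact hΩ)

lemma enorm_Xop_le (hΥ : ∀ g b b', 0 ≤ Υ n g b b') (f : X → ℝ → ℝ) {b : X} (hb : b ∈ Ω n m)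
    (t : ℝ) :
    ‖Xop act ν Υ Ω n m f b t‖ₑ ≤ ∑' g, ∫⁻ b', ENNReal.ofReal (Υ n g b b') *
      ‖f (act g⁻¹ b') (t + Rlog act ν g⁻¹ b')‖ₑ ∂ν := by
  refine enorm_tsum_le_tsum_enorm.trans (ENNReal.tsum_le_tsum fun g => ?_)
  refine (enorm_integral_le_lintegral_enorm _).trans_eq (lintegral_congr fun b' => ?_)
  simp [hb, enorm_mul, Real.enorm_of_nonneg (hΥ g b b')]

lemma lintegral_enorm_Xop_le_tsum [Countable G] [SFinite ν] (hact : ∀ g : G, Measurable (act g))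
    (hΥ : ∀ g, Measurable (Function.uncurry (Υ n g))) (hΥ_nonneg : ∀ g b b', 0 ≤ Υ n g b b')
    (hΩ : MeasurableSet (Ω n m)) {f : X × ℝ → ℝ} (hf : Measurable f) :
    ∫⁻ p, ‖Xop act ν Υ Ω n m (Function.curry f) p.1 p.2‖ₑ ∂(ν.prod theta)
      ≤ ∑' g, ∫⁻ p, ∫⁻ b, ENNReal.ofReal (Υ n g p.1 b) *
          ‖f (act g⁻¹ b, p.2 + Rlog act ν g⁻¹ b)‖ₑ ∂ν ∂((ν.restrict (Ω n m)).prod theta) := by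
  have hΩ' : MeasurableSet (Ω n m ×ˢ (univ : Set ℝ)) := hΩ.prod MeasurableSet.univ
  have hsupp : Function.support (fun p : X × ℝ =>
      ‖Xop act ν Υ Ω n m (Function.curry f) p.1 p.2‖ₑ) ⊆ Ω n m ×ˢ univ := by
    intro p hp
    refine ⟨?_, mem_univ _⟩
    by_contra hpΩ
    simp [Xop, hpΩ] at hp
  have hmeas : ∀ g : G, AEMeasurable (fun p : X × ℝ => ∫⁻ b, ENNReal.ofReal (Υ n g p.1 b) *
      ‖f (act g⁻¹ b, p.2 + Rlog act ν g⁻¹ b)‖ₑ ∂ν) ((ν.prod theta).restrict (Ω n m ×ˢ univ)) :=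
    fun g => (measurable_lintegral_mul_comp_add (hΥ g).ennreal_ofReal
      (F := fun b t => ‖f (act g⁻¹ b, t)‖ₑ)
      (hf.enorm.comp (((hact g⁻¹).comp measurable_fst).prodMk measurable_snd))
      (measurable_Rlog act ν g⁻¹)).aemeasurable
  rw [← setLIntegral_eq_of_support_subset hsupp, Measure.restrict_prod_eq_prod_univ,
    ← lintegral_tsum hmeas]
  exact setLIntegral_mono' hΩ' fun p hp => enorm_Xop_le hΥ_nonneg _ hp.1 _

section Admissible

variable [TopologicalSpace X] [IsFiniteMeasure ν]
  {dZ : X → X → ℝ} {D C : ℕ → ℝ} {N : ℕ → ℕ} {fbd : ℕ → ℕ → ℝ}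

lemma IsRelAdmissible.ae_abs_Rlog_le [OpensMeasurableSpace X]
    (hadm : IsRelAdmissible act dZ ν Υ Ω D C N fbd)
    (hn : N m < n) (g : G) :
    ∀ᵐ z ∂((ν.restrict (Ω n m)).prod ν),
      ENNReal.ofReal (Υ n g z.1 z.2) ≠ 0 → |Rlog act ν g⁻¹ z.2| ≤ C m := by
  rw [Measure.restrict_prod_eq_prod_univ]
  filter_upwards [ae_restrict_of_ae (hadm.R_bound m n hn g),
    ae_restrict_mem ((hadm.closed_Ω n m).measurableSet.prod MeasurableSet.univ)]
    with z hz hzΩ hΥ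
  have hR := (hz hzΩ.1 (ENNReal.ofReal_pos.1 (pos_iff_ne_zero.2 hΥ))).1
  linarith [abs_nonneg (Rlog act ν g⁻¹ z.1)]

lemma IsRelAdmissible.ae_tsum_setLIntegral_mul_rnDeriv_le [Countable G]
    (hadm : IsRelAdmissible act dZ ν Υ Ω D C N fbd) (hn : N m < n) :
    ∀ᵐ c ∂ν, ∑' g : G, (∫⁻ b in Ω n m, ENNReal.ofReal (Υ n g b (act g c)) ∂ν)
      * (ν.map (act g⁻¹)).rnDeriv ν c ≤ ENNReal.ofReal (C m) := by
  filter_upwards [hadm.bdd₂ m n hn,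
    ae_all_iff.2 fun g : G => Measure.rnDeriv_lt_top (ν.map (act g⁻¹)) ν] with c hc hfin
  refine le_of_eq_of_le ?_ hc
  have hmeas : ∀ g : G, AEMeasurable
      (fun b => ENNReal.ofReal (Υ n g b (act g c) * RN act ν g c)) (ν.restrict (Ω n m)) :=
    fun g => (((hadm.meas_Υ n g).comp
      (measurable_id.prodMk measurable_const)).mul_const _).ennreal_ofReal.aemeasurable
  rw [lintegral_tsum hmeas]
  refine tsum_congr fun g => ?_
  rw [← lintegral_mul_const' _ _ (hfin g).ne]
  refine lintegral_congr fun b => ?_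
  rw [ENNReal.ofReal_mul (hadm.nonneg_Υ _ _ _ _), RN, ENNReal.ofReal_toReal (hfin g).ne]

lemma IsRelAdmissible.tsum_lintegral_comp_act_inv_le [Countable G]
    (hadm : IsRelAdmissible act dZ ν Υ Ω D C N fbd) (hact : ∀ g : G, Measurable (act g))
    (hact_inv : ∀ (g : G) x, act g (act g⁻¹ x) = x) (hqi : ∀ g : G, ν.map (act g) ≪ ν)
    (hn : N m < n) {H : X → ℝ≥0∞} (hH : Measurable H) :
    ∑' g : G, ∫⁻ z, ENNReal.ofReal (Υ n g z.1 z.2) * H (act g⁻¹ z.2)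
        ∂((ν.restrict (Ω n m)).prod ν)
      ≤ ENNReal.ofReal (C m) * ∫⁻ c, H c ∂ν := by
  set μ := ν.restrict (Ω n m)
  have hU : ∀ g : G, Measurable fun z : X × X => ENNReal.ofReal (Υ n g z.1 z.2) :=
    fun g => (hadm.meas_Υ n g).ennreal_ofReal
  have hmeas : ∀ g : G, AEMeasurable (fun c => (∫⁻ b, ENNReal.ofReal (Υ n g b (act g c)) ∂μ)
      * (ν.map (act g⁻¹)).rnDeriv ν c * H c) ν := fun g =>
    ((((hU g).comp (measurable_snd.prodMk ((hact g).comp measurable_fst))).lintegral_prod_right'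
      |>.mul (Measure.measurable_rnDeriv _ _)).mul hH).aemeasurable
  calc ∑' g : G, ∫⁻ z, ENNReal.ofReal (Υ n g z.1 z.2) * H (act g⁻¹ z.2) ∂(μ.prod ν)
      = ∫⁻ c, (∑' g : G, (∫⁻ b, ENNReal.ofReal (Υ n g b (act g c)) ∂μ)
          * (ν.map (act g⁻¹)).rnDeriv ν c) * H c ∂ν := by
        simp_rw [← ENNReal.tsum_mul_right]
        rw [lintegral_tsum hmeas]
        exact tsum_congr fun g => lintegral_prod_comp_eq_lintegral_rnDeriv_mul
          (hact g⁻¹) (hact g) (hact_inv g) (hqi g⁻¹) (hU g) hH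
    _ ≤ ∫⁻ c, ENNReal.ofReal (C m) * H c ∂ν := by
        refine lintegral_mono_ae ?_
        filter_upwards [hadm.ae_tsum_setLIntegral_mul_rnDeriv_le hn] with c hc
        gcongr
    _ = ENNReal.ofReal (C m) * ∫⁻ c, H c ∂ν := lintegral_const_mul _ hH

lemma IsRelAdmissible.lintegral_enorm_Xop_le [Countable G] [OpensMeasurableSpace X]
    (hadm : IsRelAdmissible act dZ ν Υ Ω D C N fbd) (hact : ∀ g : G, Measurable (act g))
    (hact_inv : ∀ (g : G) x, act g (act g⁻¹ x) = x) (hqi : ∀ g : G, ν.map (act g) ≪ ν)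
    (hn : N m < n) {f : X × ℝ → ℝ} (hf : Measurable f) :
    ∫⁻ p, ‖Xop act ν Υ Ω n m (Function.curry f) p.1 p.2‖ₑ ∂(ν.prod theta)
      ≤ ENNReal.ofReal (Real.exp (C m) * C m) * ∫⁻ p, ‖f p‖ₑ ∂(ν.prod theta) := by
  have hH : Measurable fun c => ∫⁻ t, ‖f (c, t)‖ₑ ∂theta := hf.enorm.lintegral_prod_right'
  calc ∫⁻ p, ‖Xop act ν Υ Ω n m (Function.curry f) p.1 p.2‖ₑ ∂(ν.prod theta)
      ≤ ∑' g, ∫⁻ p, ∫⁻ b, ENNReal.ofReal (Υ n g p.1 b) *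
          ‖f (act g⁻¹ b, p.2 + Rlog act ν g⁻¹ b)‖ₑ ∂ν ∂((ν.restrict (Ω n m)).prod theta) :=
        lintegral_enorm_Xop_le_tsum hact (hadm.meas_Υ n) (hadm.nonneg_Υ n)
          (hadm.closed_Ω n m).measurableSet hf
    _ ≤ ∑' g, ENNReal.ofReal (Real.exp (C m)) * ∫⁻ z, ENNReal.ofReal (Υ n g z.1 z.2) *
          ∫⁻ t, ‖f (act g⁻¹ z.2, t)‖ₑ ∂theta ∂((ν.restrict (Ω n m)).prod ν) :=
        ENNReal.tsum_le_tsum fun g => lintegral_prod_theta_comp_add_le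
          (hadm.meas_Υ n g).ennreal_ofReal (F := fun b t => ‖f (act g⁻¹ b, t)‖ₑ)
          (hf.enorm.comp (((hact g⁻¹).comp measurable_fst).prodMk measurable_snd))
          (measurable_Rlog act ν g⁻¹) (hadm.ae_abs_Rlog_le hn g)
    _ ≤ ENNReal.ofReal (Real.exp (C m)) * (ENNReal.ofReal (C m) *
          ∫⁻ c, ∫⁻ t, ‖f (c, t)‖ₑ ∂theta ∂ν) := by
        rw [ENNReal.tsum_mul_left]
        gcongr
        exact hadm.tsum_lintegral_comp_act_inv_le hact hact_inv hqi hn hH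
    _ = ENNReal.ofReal (Real.exp (C m) * C m) * ∫⁻ p, ‖f p‖ₑ ∂(ν.prod theta) := by
        rw [← lintegral_prod _ hf.enorm.aemeasurable, ENNReal.ofReal_mul (Real.exp_nonneg _),
          mul_assoc]

end Admissible

end Operator

theorem stmt3_general {G X : Type*} [Group G] [Countable G]
    [MetricSpace X] [MeasurableSpace X] [BorelSpace X]
    (act : G → X → X) (hact_one : act 1 = id)
    (hact_mul : ∀ g h : G, act (g * h) = act g ∘ act h)
    (hact_meas : ∀ g : G, Measurable (act g))
    (ν : Measure X) [IsProbabilityMeasure ν]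
    (hqi : ∀ g : G, ν.map (act g) ≪ ν ∧ ν ≪ ν.map (act g))
    (Υ : ℕ → G → X → X → ℝ) (Ω : ℕ → ℕ → Set X)
    (D C : ℕ → ℝ) (N : ℕ → ℕ) (fbd : ℕ → ℕ → ℝ)
    (hadm : IsRelAdmissible act (fun a b : X => dist a b) ν Υ Ω D C N fbd) :
    ∀ m : ℕ, ∃ C₁ : ℝ, 0 < C₁ ∧ ∀ n : ℕ, N m < n → ∀ f : X × ℝ → ℝ,
      Integrable f (ν.prod theta) →
      Integrable (fun p : X × ℝ => Xop act ν Υ Ω n m (Function.curry f) p.1 p.2)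
          (ν.prod theta) ∧
        ∫ p, |Xop act ν Υ Ω n m (Function.curry f) p.1 p.2| ∂(ν.prod theta)
          ≤ C₁ * ∫ p, |f p| ∂(ν.prod theta) := by
  intro m
  have hC : 0 < Real.exp (C m) * C m := mul_pos (Real.exp_pos _) (hadm.C_pos m)
  refine ⟨_, hC, fun n hn f hf => ?_⟩
  have hact_inv : ∀ (g : G) x, act g (act g⁻¹ x) = x := fun g x => by
    rw [← Function.comp_apply (f := act g), ← hact_mul, mul_inv_cancel, hact_one, id]
  have hXf := Xop_ae_eq_of_ae_eq (Υ := Υ) (Ω := Ω) (n := n) (m := m)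
    (fun g => ⟨hact_meas g, (hqi g).1⟩) hf.1.ae_eq_mk
  have hbound := hadm.lintegral_enorm_Xop_le hact_meas hact_inv (fun g => (hqi g).1) hn
    hf.1.measurable_mk
  rw [lintegral_congr_ae (hf.1.ae_eq_mk.mono fun p hp => congrArg enorm hp.symm)] at hbound
  have hint : Integrable (fun p : X × ℝ =>
      Xop act ν Υ Ω n m (Function.curry (hf.1.mk f)) p.1 p.2) (ν.prod theta) :=
    ⟨(measurable_Xop hact_meas (hadm.meas_Υ n) (hadm.closed_Ω n m).measurableSet
      hf.1.measurable_mk).aestronglyMeasurable,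
      hbound.trans_lt (ENNReal.mul_lt_top ENNReal.ofReal_lt_top hf.2)⟩
  refine ⟨hint.congr hXf.symm, ?_⟩
  simp_rw [← Real.norm_eq_abs]
  rw [integral_congr_ae (hXf.mono fun p hp => congrArg norm hp),
    integral_norm_eq_lintegral_enorm hint.1, integral_norm_eq_lintegral_enorm hf.1,
    ← ENNReal.toReal_ofReal hC.le, ← ENNReal.toReal_mul]
  exact ENNReal.toReal_mono (ENNReal.mul_ne_top ENNReal.ofReal_ne_top hf.2.ne) hbound

theorem stmt3 {G X : Type*} [Group G] [Countable G]
    [MetricSpace X] [CompactSpace X] [MeasurableSpace X] [BorelSpace X]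
    (act : G → X → X) (hact_one : act 1 = id)
    (hact_mul : ∀ g h : G, act (g * h) = act g ∘ act h)
    (hact_meas : ∀ g : G, Measurable (act g))
    (ν : Measure X) [IsProbabilityMeasure ν]
    (hqi : ∀ g : G, ν.map (act g) ≪ ν ∧ ν ≪ ν.map (act g))
    (Υ : ℕ → G → X → X → ℝ) (Ω : ℕ → ℕ → Set X)
    (D C : ℕ → ℝ) (N : ℕ → ℕ) (fbd : ℕ → ℕ → ℝ)
    (hadm : IsRelAdmissible act (fun a b : X => dist a b) ν Υ Ω D C N fbd) :
    ∀ m : ℕ, ∃ C₁ : ℝ, 0 < C₁ ∧ ∀ n : ℕ, N m < n → ∀ f : X × ℝ → ℝ,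
      Integrable f (ν.prod theta) →
      Integrable (fun p : X × ℝ => Xop act ν Υ Ω n m (Function.curry f) p.1 p.2)
          (ν.prod theta) ∧
        ∫ p, |Xop act ν Υ Ω n m (Function.curry f) p.1 p.2| ∂(ν.prod theta)
          ≤ C₁ * ∫ p, |f p| ∂(ν.prod theta) :=
  stmt3_general act hact_one hact_mul hact_meas ν hqi Υ Ω D C N fbd hadm
end StableRatio
end

section
/- Suppose the family Υ_n is admissible relative to the sets Ω(n,m) for G ↷ (X,ν). Then for every m and every f ∈ L¹(ν×θ) ∩ L^∞(ν×θ), limsup_{n→∞} ‖W_{n,m}f − f‖_{L¹(ν×θ)} ≤ D(m)‖f‖_{L^∞(ν×θ)}. -/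
open MeasureTheory Filter Metric Set
open scoped ENNReal

namespace StableRatio

variable {G : Type*} [Group G] [Countable G]

/-!
On `Ω(n,m)` the operator `W_{n,m}` averages `f(·,t)` against the probability measure
`∑_g Υ_n(g,b,b') dν(b')`, which by admissibility is concentrated on the ball of radius
`f_m(n)` around `b`. Approximate `f` in `L¹` by a compactly supported continuous `g`. Then
`W g - g` is uniformly small on `Ω(n,m)` once `f_m(n)` is below the modulus of uniform continuity
of `g`; `W (f - g)` has `L¹` norm at most `C(m) ‖f - g‖₁` by Tonelli and the first bound
in (v); and off `Ω(n,m)`, where `W f = 0`, the error is at most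
`‖f‖_∞ ν(Ω(n,m)ᶜ) ≤ D(m) ‖f‖_∞`.
-/

lemma _root_.MeasureTheory.lintegral_lintegral_mul_le {α β : Type*} [MeasurableSpace α]
    [MeasurableSpace β] {μ : Measure α} {ν : Measure β} [SFinite μ] [SFinite ν]
    {k : α → β → ℝ≥0∞} (hk : Measurable (Function.uncurry k)) {c : ℝ≥0∞}
    (hc : ∀ᵐ y ∂ν, ∫⁻ x, k x y ∂μ ≤ c) {φ : β → ℝ≥0∞} (hφ : Measurable φ) :
    ∫⁻ x, ∫⁻ y, k x y * φ y ∂ν ∂μ ≤ c * ∫⁻ y, φ y ∂ν :=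
  calc ∫⁻ x, ∫⁻ y, k x y * φ y ∂ν ∂μ = ∫⁻ y, (∫⁻ x, k x y ∂μ) * φ y ∂ν := by
        rw [lintegral_lintegral_swap (hk.mul (hφ.comp measurable_snd)).aemeasurable]
        congr with y
        exact lintegral_mul_const _ (hk.comp measurable_prodMk_right)
    _ ≤ ∫⁻ y, c * φ y ∂ν := lintegral_mono_ae (hc.mono fun y hy => mul_le_mul_left hy _)
    _ = c * ∫⁻ y, φ y ∂ν := lintegral_const_mul _ hφ

lemma _root_.MeasureTheory.enorm_integral_sub_le {Z : Type*} [MeasurableSpace Z]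
    {κ : Measure Z} [IsProbabilityMeasure κ] {f g : Z → ℝ} (hf : Integrable f κ)
    (hg : Integrable g κ) {c ε : ℝ} (hgc : ∀ᵐ x ∂κ, |g x - c| ≤ ε) (a : ℝ) :
    ‖∫ x, f x ∂κ - a‖ₑ ≤ ∫⁻ x, ‖f x - g x‖ₑ ∂κ + ENNReal.ofReal ε + ‖c - a‖ₑ := by
  have hgc' : ‖∫ x, g x ∂κ - c‖ₑ ≤ ENNReal.ofReal ε := by
    have h := norm_integral_le_of_norm_le_const (μ := κ) (f := fun x => g x - c) hgc
    rw [integral_sub hg (integrable_const c), integral_const, probReal_univ, one_smul,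
      mul_one] at h
    rw [Real.enorm_eq_ofReal_abs]
    exact ENNReal.ofReal_le_ofReal h
  calc ‖∫ x, f x ∂κ - a‖ₑ = ‖∫ x, f x - g x ∂κ + (∫ x, g x ∂κ - c) + (c - a)‖ₑ := by
        rw [integral_sub hf hg]; ring_nf
    _ ≤ ‖∫ x, f x - g x ∂κ‖ₑ + ‖∫ x, g x ∂κ - c‖ₑ + ‖c - a‖ₑ :=
        (enorm_add_le _ _).trans (add_le_add_left (enorm_add_le _ _) _)
    _ ≤ _ := by grw [enorm_integral_le_lintegral_enorm, hgc']

lemma _root_.MeasureTheory.integral_abs_le_of_lintegral_enorm_le {α : Type*}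
    [MeasurableSpace α] {μ : Measure α} {f : α → ℝ} {c : ℝ} (hc : 0 ≤ c)
    (hf : ∫⁻ x, ‖f x‖ₑ ∂μ ≤ ENNReal.ofReal c) : ∫ x, |f x| ∂μ ≤ c := by
  rw [← ENNReal.ofReal_le_ofReal_iff hc]
  refine (Real.ofReal_le_enorm _).trans ((enorm_integral_le_lintegral_enorm _).trans ?_)
  simpa only [Real.enorm_abs] using hf

lemma _root_.MeasureTheory.AEStronglyMeasurable.exists_measurable_abs_le_ae_eq {α : Type*}
    [MeasurableSpace α] {μ : Measure α} {f : α → ℝ} (hf : AEStronglyMeasurable f μ) {M : ℝ}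
    (hM : 0 ≤ M) (hfM : ∀ᵐ x ∂μ, |f x| ≤ M) :
    ∃ f', Measurable f' ∧ (∀ x, |f' x| ≤ M) ∧ f =ᵐ[μ] f' := by
  have hg := hf.stronglyMeasurable_mk.measurable
  refine ⟨{x | |hf.mk f x| ≤ M}.indicator (hf.mk f),
    hg.indicator (measurableSet_le hg.abs measurable_const), fun x => ?_, ?_⟩
  · by_cases hx : |hf.mk f x| ≤ M
    · rwa [indicator_of_mem (s := {x | |hf.mk f x| ≤ M}) hx]
    · rwa [indicator_of_notMem (s := {x | |hf.mk f x| ≤ M}) hx, abs_zero]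
  · filter_upwards [hf.ae_eq_mk, hfM] with x hx hxM
    rw [indicator_of_mem (s := {x | |hf.mk f x| ≤ M}) (show |hf.mk f x| ≤ M by rwa [← hx]),
      hx]

lemma _root_.MeasureTheory.MemLp.ae_abs_le_toReal_eLpNorm_top {α : Type*} [MeasurableSpace α]
    {μ : Measure α} {f : α → ℝ} (hf : MemLp f ⊤ μ) :
    ∀ᵐ x ∂μ, |f x| ≤ (eLpNorm f ⊤ μ).toReal := by
  rw [toReal_eLpNorm hf.1]
  exact ae_le_lpNorm_exponent_top hf

instance isProbabilityMeasure_theta : IsProbabilityMeasure theta := by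
  constructor
  have hIoi : IntegrableOn (fun t : ℝ => Real.exp (-|t|)) (Ioi 0) :=
    (exp_neg_integrableOn_Ioi 0 one_pos).congr_fun
      (fun x hx => by simp [abs_of_pos (mem_Ioi.mp hx)]) measurableSet_Ioi
  have hIic : IntegrableOn (fun t : ℝ => Real.exp (-|t|)) (Iic 0) :=
    (integrableOn_exp_Iic 0).congr_fun
      (fun x hx => by rw [abs_of_nonpos (mem_Iic.mp hx), neg_neg]) measurableSet_Iic
  have hint : Integrable (fun t : ℝ => 1 / 2 * Real.exp (-|t|)) := by
    have h := hIic.union hIoi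
    rw [Iic_union_Ioi, integrableOn_univ] at h
    exact h.const_mul _
  have hval : ∫ t : ℝ, 1 / 2 * Real.exp (-|t|) = 1 := by
    rw [integral_const_mul, integral_comp_abs (f := fun x => Real.exp (-x)),
      integral_exp_neg_Ioi_zero]
    norm_num
  rw [theta, withDensity_apply _ MeasurableSet.univ, Measure.restrict_univ,
    ← ofReal_integral_eq_lintegral_ofReal hint (Eventually.of_forall fun t => by positivity),
    hval, ENNReal.ofReal_one]

section TransitionMeasure

variable {ι Z : Type*} [MeasurableSpace Z] (ν : Measure Z) (K : ι → Z → Z → ℝ)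

noncomputable def transitionMeasure (b : Z) : Measure Z :=
  ν.withDensity fun b' => ∑' i, ENNReal.ofReal (K i b b')

variable {ν K} {b : Z}

lemma measurable_transitionMeasure_density [Countable ι] (hK : ∀ i, Measurable (K i b)) :
    Measurable fun b' => ∑' i, ENNReal.ofReal (K i b b') :=
  Measurable.tsum fun i => (hK i).ennreal_ofReal

lemma isProbabilityMeasure_transitionMeasure [Countable ι] (hK : ∀ i, Measurable (K i b))
    (h : ∑' i, ∫⁻ b', ENNReal.ofReal (K i b b') ∂ν = 1) :
    IsProbabilityMeasure (transitionMeasure ν K b) := by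
  constructor
  rw [transitionMeasure, withDensity_apply _ MeasurableSet.univ, Measure.restrict_univ,
    lintegral_tsum fun i => (hK i).ennreal_ofReal.aemeasurable, h]

lemma ae_transitionMeasure [Countable ι] (hK : ∀ i, Measurable (K i b)) {p : Z → Prop}
    (hp : ∀ i b', 0 < K i b b' → p b') : ∀ᵐ b' ∂transitionMeasure ν K b, p b' := by
  rw [transitionMeasure, ae_withDensity_iff (measurable_transitionMeasure_density hK)]
  refine Eventually.of_forall fun b' hb' => ?_
  obtain ⟨i, hi⟩ : ∃ i, ENNReal.ofReal (K i b b') ≠ 0 := by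
    simpa [ENNReal.tsum_eq_zero] using hb'
  exact hp i b' (ENNReal.ofReal_pos.mp (pos_iff_ne_zero.mpr hi))

lemma lintegral_transitionMeasure [Countable ι] (hK : ∀ i, Measurable (K i b))
    {φ : Z → ℝ≥0∞} (hφ : Measurable φ) :
    ∫⁻ b', φ b' ∂transitionMeasure ν K b =
      ∫⁻ b', (∑' i, ENNReal.ofReal (K i b b')) * φ b' ∂ν :=
  lintegral_withDensity_eq_lintegral_mul _ (measurable_transitionMeasure_density hK) hφ

lemma transitionMeasure_eq_sum [Countable ι] (hK : ∀ i, Measurable (K i b)) :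
    transitionMeasure ν K b =
      Measure.sum fun i => ν.withDensity fun b' => ENNReal.ofReal (K i b b') := by
  rw [transitionMeasure, ← withDensity_tsum fun i => (hK i).ennreal_ofReal]
  congr with b'
  rw [ENNReal.tsum_apply]

lemma tsum_integral_mul_eq_integral_transitionMeasure [Countable ι]
    (hK0 : ∀ i b', 0 ≤ K i b b') (hK : ∀ i, Measurable (K i b)) {φ : Z → ℝ}
    (hφ : Integrable φ (transitionMeasure ν K b)) :
    ∑' i, ∫ b', K i b b' * φ b' ∂ν = ∫ b', φ b' ∂transitionMeasure ν K b := by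
  rw [transitionMeasure_eq_sum hK] at hφ ⊢
  rw [integral_sum_measure hφ]
  refine tsum_congr fun i => ?_
  rw [integral_withDensity_eq_integral_toReal_smul (hK i).ennreal_ofReal
    (Eventually.of_forall fun _ => ENNReal.ofReal_lt_top)]
  congr 1 with b'
  rw [ENNReal.toReal_ofReal (hK0 i b'), smul_eq_mul]

lemma setLIntegral_lintegral_transitionMeasure_le [Countable ι] [SFinite ν]
    (hK : ∀ i, Measurable (Function.uncurry (K i))) {S : Set Z} {c : ℝ≥0∞}
    (hc : ∀ᵐ b' ∂ν, ∫⁻ b in S, ∑' i, ENNReal.ofReal (K i b b') ∂ν ≤ c)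
    {φ : Z → ℝ≥0∞} (hφ : Measurable φ) :
    ∫⁻ b in S, ∫⁻ b', φ b' ∂transitionMeasure ν K b ∂ν ≤ c * ∫⁻ b', φ b' ∂ν := by
  simp_rw [lintegral_transitionMeasure (fun i => (hK i).comp measurable_prodMk_left) hφ]
  exact lintegral_lintegral_mul_le (Measurable.tsum fun i => (hK i).ennreal_ofReal) hc hφ

end TransitionMeasure

section Wop

variable {G Z : Type*} [MeasurableSpace Z] {ν : Measure Z} {Υ : ℕ → G → Z → Z → ℝ}
  {Ω : ℕ → ℕ → Set Z} {n m : ℕ} {b : Z}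

lemma Wop_of_notMem (hb : b ∉ Ω n m) (f : Z → ℝ → ℝ) (t : ℝ) : Wop ν Υ Ω n m f b t = 0 := by
  simp [Wop, indicator_of_notMem hb]

lemma Wop_of_mem [Countable G] (hΥ0 : ∀ g b', 0 ≤ Υ n g b b')
    (hΥ : ∀ g, Measurable (Υ n g b)) (hb : b ∈ Ω n m) {f : Z → ℝ → ℝ} {t : ℝ}
    (hf : Integrable (fun b' => f b' t) (transitionMeasure ν (Υ n) b)) :
    Wop ν Υ Ω n m f b t = ∫ b', f b' t ∂transitionMeasure ν (Υ n) b := by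
  simp only [Wop, indicator_of_mem hb, one_mul]
  exact tsum_integral_mul_eq_integral_transitionMeasure hΥ0 hΥ hf

lemma Wop_congr_ae [SFinite ν] {θ : Measure ℝ} [SFinite θ] {f f' : Z × ℝ → ℝ}
    (hff' : f =ᵐ[ν.prod θ] f') :
    (fun p => Wop ν Υ Ω n m (Function.curry f) p.1 p.2) =ᵐ[ν.prod θ]
      fun p => Wop ν Υ Ω n m (Function.curry f') p.1 p.2 := by
  have hswap : ∀ᵐ q ∂θ.prod ν, f q.swap = f' q.swap :=
    Measure.measurePreserving_swap.quasiMeasurePreserving.tendsto_ae.eventually hff'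
  filter_upwards [Measure.quasiMeasurePreserving_snd.tendsto_ae.eventually
    (Measure.ae_ae_of_ae_prod hswap)] with p hp
  refine tsum_congr fun g => integral_congr_ae ?_
  filter_upwards [hp] with b' hb'
  simp only [Function.curry_apply, Prod.swap_prod_mk] at hb' ⊢
  rw [hb']

end Wop

namespace IsRelAdmissible

variable {G X : Type*} [Group G] [MetricSpace X] [MeasurableSpace X] {act : G → X → X}
  {ν : Measure X} [IsProbabilityMeasure ν] {Υ : ℕ → G → X → X → ℝ} {Ω : ℕ → ℕ → Set X}
  {D C : ℕ → ℝ} {N : ℕ → ℕ} {fbd : ℕ → ℕ → ℝ} {n m : ℕ}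

lemma measurable_section
    (hadm : IsRelAdmissible act (fun a b : X => dist a b) ν Υ Ω D C N fbd)
    (n : ℕ) (g : G) (b : X) : Measurable (Υ n g b) :=
  (hadm.meas_Υ n g).comp measurable_prodMk_left

lemma isProbabilityMeasure_transitionMeasure [Countable G]
    (hadm : IsRelAdmissible act (fun a b : X => dist a b) ν Υ Ω D C N fbd) (n : ℕ) (b : X) :
    IsProbabilityMeasure (transitionMeasure ν (Υ n) b) :=
  StableRatio.isProbabilityMeasure_transitionMeasure (hadm.measurable_section n · b)
    (hadm.normalized n b)

lemma ae_dist_lt [Countable G]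
    (hadm : IsRelAdmissible act (fun a b : X => dist a b) ν Υ Ω D C N fbd)
    {b : X} (hb : b ∈ Ω n m) : ∀ᵐ b' ∂transitionMeasure ν (Υ n) b, dist b b' < fbd m n :=
  ae_transitionMeasure (hadm.measurable_section n · b) fun g b' hpos =>
    (hadm.close n m g b b' hb hpos).1

lemma measure_compl_le [BorelSpace X]
    (hadm : IsRelAdmissible act (fun a b : X => dist a b) ν Υ Ω D C N fbd)
    (n m : ℕ) : ν (Ω n m)ᶜ ≤ ENNReal.ofReal (D m) := by
  rw [prob_compl_eq_one_sub (hadm.closed_Ω n m).measurableSet, tsub_le_iff_right]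
  calc (1 : ℝ≥0∞) = ENNReal.ofReal (D m + (1 - D m)) := by
        rw [add_sub_cancel, ENNReal.ofReal_one]
    _ ≤ ENNReal.ofReal (D m) + ENNReal.ofReal (1 - D m) := ENNReal.ofReal_add_le
    _ ≤ ENNReal.ofReal (D m) + ν (Ω n m) := by grw [(hadm.Ω_big n m).le]

lemma enorm_Wop_sub_le [Countable G]
    (hadm : IsRelAdmissible act (fun a b : X => dist a b) ν Υ Ω D C N fbd)
    {f g : X × ℝ → ℝ} (hf : Measurable f) {M : ℝ} (hfM : ∀ p, |f p| ≤ M)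
    (hg : Measurable g) {M' : ℝ} (hgM : ∀ p, |g p| ≤ M') {ε : ℝ}
    (hgε : ∀ b b' t, dist b b' < fbd m n → |g (b', t) - g (b, t)| ≤ ε) (b : X) (t : ℝ) :
    ‖Wop ν Υ Ω n m (Function.curry f) b t - f (b, t)‖ₑ ≤
      (Ω n m).indicator (fun b => ∫⁻ b', ‖f (b', t) - g (b', t)‖ₑ
          ∂transitionMeasure ν (Υ n) b) b +
        ENNReal.ofReal ε + ‖f (b, t) - g (b, t)‖ₑ +
        (Ω n m)ᶜ.indicator (fun _ => ENNReal.ofReal M) b := by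
  by_cases hb : b ∈ Ω n m
  · have := hadm.isProbabilityMeasure_transitionMeasure n b
    have hsec : ∀ {h : X × ℝ → ℝ} {B : ℝ}, Measurable h → (∀ p, |h p| ≤ B) →
        Integrable (fun b' => h (b', t)) (transitionMeasure ν (Υ n) b) := fun hh hB =>
      .of_bound (hh.comp measurable_prodMk_right).aestronglyMeasurable _
        (Eventually.of_forall fun _ => hB _)
    have hW : Wop ν Υ Ω n m (Function.curry f) b t =
        ∫ b', f (b', t) ∂transitionMeasure ν (Υ n) b :=
      Wop_of_mem (hadm.nonneg_Υ n · b) (hadm.measurable_section n · b) hb (hsec hf hfM)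
    rw [indicator_of_mem hb, indicator_of_notMem (notMem_compl_iff.mpr hb), add_zero, hW,
      enorm_sub_rev (f (b, t))]
    exact enorm_integral_sub_le (hsec hf hfM) (hsec hg hgM)
      ((hadm.ae_dist_lt hb).mono fun b' h => hgε b b' t h) _
  · rw [indicator_of_notMem hb, indicator_of_mem (mem_compl hb), zero_add,
      Wop_of_notMem hb, zero_sub, enorm_neg, Real.enorm_eq_ofReal_abs]
    exact (ENNReal.ofReal_le_ofReal (hfM _)).trans le_add_self

lemma lintegral_indicator_transitionMeasure_le [Countable G] [BorelSpace X]
    (hadm : IsRelAdmissible act (fun a b : X => dist a b) ν Υ Ω D C N fbd) (hn : N m < n)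
    {θ : Measure ℝ} [IsProbabilityMeasure θ] {h : X × ℝ → ℝ≥0∞} (hh : Measurable h) :
    ∫⁻ p, (Ω n m).indicator (fun b => ∫⁻ b', h (b', p.2) ∂transitionMeasure ν (Υ n) b) p.1
        ∂ν.prod θ ≤ ENNReal.ofReal (C m) * ∫⁻ p, h p ∂ν.prod θ :=
  calc _ ≤ ∫⁻ b, ∫⁻ t, (Ω n m).indicator
          (fun b => ∫⁻ b', h (b', t) ∂transitionMeasure ν (Υ n) b) b ∂θ ∂ν :=
        lintegral_prod_le _
    _ = ∫⁻ b in Ω n m, ∫⁻ b', ∫⁻ t, h (b', t) ∂θ ∂transitionMeasure ν (Υ n) b ∂ν := by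
        rw [← lintegral_indicator (hadm.closed_Ω n m).measurableSet]
        congr with b
        by_cases hb : b ∈ Ω n m
        · have := hadm.isProbabilityMeasure_transitionMeasure n b
          simp only [indicator_of_mem hb]
          exact lintegral_lintegral_swap (hh.comp measurable_swap).aemeasurable
        · simp [indicator_of_notMem hb]
    _ ≤ ENNReal.ofReal (C m) * ∫⁻ b', ∫⁻ t, h (b', t) ∂θ ∂ν :=
        setLIntegral_lintegral_transitionMeasure_le (hadm.meas_Υ n) (hadm.bdd₁ m n hn)
          hh.lintegral_prod_right'
    _ = ENNReal.ofReal (C m) * ∫⁻ p, h p ∂ν.prod θ := by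
        rw [lintegral_prod _ hh.aemeasurable]

lemma lintegral_indicator_compl_le [BorelSpace X]
    (hadm : IsRelAdmissible act (fun a b : X => dist a b) ν Υ Ω D C N fbd)
    {θ : Measure ℝ} [IsProbabilityMeasure θ] (M : ℝ) :
    ∫⁻ p, (Ω n m)ᶜ.indicator (fun _ => ENNReal.ofReal M) p.1 ∂ν.prod θ ≤
      ENNReal.ofReal M * ENNReal.ofReal (D m) := by
  have hΩc := (hadm.closed_Ω n m).measurableSet.compl
  have hm : Measurable fun p : X × ℝ => (Ω n m)ᶜ.indicator (fun _ => ENNReal.ofReal M) p.1 :=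
    (measurable_const.indicator hΩc).comp measurable_fst
  rw [lintegral_prod _ hm.aemeasurable]
  simp only [lintegral_const, measure_univ, mul_one]
  rw [lintegral_indicator_const hΩc]
  grw [hadm.measure_compl_le n m]

lemma lintegral_enorm_Wop_sub_le [Countable G] [BorelSpace X]
    (hadm : IsRelAdmissible act (fun a b : X => dist a b) ν Υ Ω D C N fbd) (hn : N m < n)
    {θ : Measure ℝ} [IsProbabilityMeasure θ]
    {f g : X × ℝ → ℝ} (hf : Measurable f) {M : ℝ} (hfM : ∀ p, |f p| ≤ M)
    (hg : Measurable g) {M' : ℝ} (hgM : ∀ p, |g p| ≤ M') {ε : ℝ}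
    (hgε : ∀ b b' t, dist b b' < fbd m n → |g (b', t) - g (b, t)| ≤ ε) :
    ∫⁻ p, ‖Wop ν Υ Ω n m (Function.curry f) p.1 p.2 - f p‖ₑ ∂ν.prod θ ≤
      ENNReal.ofReal ε + (1 + ENNReal.ofReal (C m)) * ∫⁻ p, ‖f p - g p‖ₑ ∂ν.prod θ +
        ENNReal.ofReal M * ENNReal.ofReal (D m) := by
  have hfg : Measurable fun p => ‖f p - g p‖ₑ := (hf.sub hg).enorm
  have hΩc : Measurable fun p : X × ℝ => (Ω n m)ᶜ.indicator (fun _ => ENNReal.ofReal M) p.1 :=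
    (measurable_const.indicator (hadm.closed_Ω n m).measurableSet.compl).comp measurable_fst
  have h₁ : Measurable fun p => ENNReal.ofReal ε + ‖f p - g p‖ₑ := by fun_prop
  have h₂ : Measurable fun p => ENNReal.ofReal ε + ‖f p - g p‖ₑ +
      (Ω n m)ᶜ.indicator (fun _ => ENNReal.ofReal M) p.1 := by fun_prop
  calc _ ≤ ∫⁻ p, (ENNReal.ofReal ε + ‖f p - g p‖ₑ +
          (Ω n m)ᶜ.indicator (fun _ => ENNReal.ofReal M) p.1) +
          (Ω n m).indicator (fun b => ∫⁻ b', ‖f (b', p.2) - g (b', p.2)‖ₑ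
            ∂transitionMeasure ν (Υ n) b) p.1 ∂ν.prod θ :=
        lintegral_mono fun p => (hadm.enorm_Wop_sub_le hf hfM hg hgM hgε p.1 p.2).trans_eq
          (by ring)
    _ = ENNReal.ofReal ε + ∫⁻ p, ‖f p - g p‖ₑ ∂ν.prod θ +
          ∫⁻ p, (Ω n m)ᶜ.indicator (fun _ => ENNReal.ofReal M) p.1 ∂ν.prod θ +
          ∫⁻ p, (Ω n m).indicator (fun b => ∫⁻ b', ‖f (b', p.2) - g (b', p.2)‖ₑ
            ∂transitionMeasure ν (Υ n) b) p.1 ∂ν.prod θ := by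
        rw [lintegral_add_left h₂, lintegral_add_left h₁, lintegral_add_left measurable_const,
          lintegral_const, measure_univ, mul_one]
    _ ≤ ENNReal.ofReal ε + ∫⁻ p, ‖f p - g p‖ₑ ∂ν.prod θ +
          ENNReal.ofReal M * ENNReal.ofReal (D m) +
          ENNReal.ofReal (C m) * ∫⁻ p, ‖f p - g p‖ₑ ∂ν.prod θ := by
        grw [hadm.lintegral_indicator_compl_le M,
          hadm.lintegral_indicator_transitionMeasure_le hn hfg]
    _ = _ := by ring

lemma eventually_integral_abs_Wop_sub_le [Countable G] [BorelSpace X] [CompactSpace X]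
    (hadm : IsRelAdmissible act (fun a b : X => dist a b) ν Υ Ω D C N fbd)
    {θ : Measure ℝ} [IsProbabilityMeasure θ] {f : X × ℝ → ℝ} (hf : Measurable f)
    (hfi : Integrable f (ν.prod θ)) {M : ℝ} (hM : 0 ≤ M) (hfM : ∀ p, |f p| ≤ M)
    {ε : ℝ} (hε : 0 < ε) :
    ∀ᶠ n in atTop,
      ∫ p, |Wop ν Υ Ω n m (Function.curry f) p.1 p.2 - f p| ∂ν.prod θ ≤ D m * M + ε := by
  have hC := hadm.C_pos m
  obtain ⟨δ, hδ, hCδ⟩ : ∃ δ > 0, (1 + C m) * δ = ε / 2 :=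
    ⟨ε / 2 / (1 + C m), by positivity, by field_simp⟩
  obtain ⟨g, hg_supp, hfg, hg_cont, -⟩ :=
    hfi.exists_hasCompactSupport_lintegral_sub_le (ENNReal.ofReal_pos.2 hδ).ne'
  obtain ⟨M', hM'⟩ := hg_supp.exists_bound_of_continuous hg_cont
  obtain ⟨r, hr, hgr⟩ := Metric.uniformContinuous_iff.mp
    (hg_supp.uniformContinuous_of_continuous hg_cont) (ε / 2) (by positivity)
  filter_upwards [eventually_gt_atTop (N m), (hadm.f_lim m).eventually_lt_const hr]
    with n hn hfbd
  have hgε : ∀ b b' t, dist b b' < fbd m n → |g (b', t) - g (b, t)| ≤ ε / 2 :=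
    fun b b' t hbb' => (hgr (by simpa [Prod.dist_eq, dist_comm] using hbb'.trans hfbd)).le
  refine integral_abs_le_of_lintegral_enorm_le (by nlinarith [hadm.D_pos m]) ?_
  calc _ ≤ ENNReal.ofReal (ε / 2) + (1 + ENNReal.ofReal (C m)) * ENNReal.ofReal δ +
          ENNReal.ofReal M * ENNReal.ofReal (D m) := by
        grw [hadm.lintegral_enorm_Wop_sub_le hn hf hfM hg_cont.measurable hM' hgε, hfg]
    _ = ENNReal.ofReal (ε / 2 + (1 + C m) * δ + M * D m) := by
        rw [← ENNReal.ofReal_one, ← ENNReal.ofReal_add zero_le_one hC.le,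
          ← ENNReal.ofReal_mul (by positivity), ← ENNReal.ofReal_mul hM,
          ← ENNReal.ofReal_add (by positivity) (by positivity),
          ← ENNReal.ofReal_add (by positivity) (mul_nonneg hM (hadm.D_pos m).le)]
    _ = ENNReal.ofReal (D m * M + ε) := by rw [hCδ]; ring_nf

lemma limsup_integral_abs_Wop_sub_le [Countable G] [BorelSpace X] [CompactSpace X]
    (hadm : IsRelAdmissible act (fun a b : X => dist a b) ν Υ Ω D C N fbd)
    {θ : Measure ℝ} [IsProbabilityMeasure θ] (m : ℕ) {f : X × ℝ → ℝ} (hf : Measurable f)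
    (hfi : Integrable f (ν.prod θ)) {M : ℝ} (hfM : ∀ p, |f p| ≤ M) :
    limsup (fun n => ∫ p, |Wop ν Υ Ω n m (Function.curry f) p.1 p.2 - f p| ∂ν.prod θ)
      atTop ≤ D m * M := by
  have := nonempty_of_isProbabilityMeasure ν
  have hM : 0 ≤ M := (abs_nonneg _).trans (hfM (Classical.arbitrary _))
  refine le_of_forall_pos_le_add fun ε hε => limsup_le_of_le ?_
    (hadm.eventually_integral_abs_Wop_sub_le hf hfi hM hfM hε)
  exact isCoboundedUnder_le_of_le atTop fun _ => integral_nonneg fun _ => abs_nonneg _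

end IsRelAdmissible

theorem stmt5_general {G X : Type*} [Group G] [Countable G]
    [MetricSpace X] [CompactSpace X] [MeasurableSpace X] [BorelSpace X]
    (act : G → X → X)
    (ν : Measure X) [IsProbabilityMeasure ν]
    (Υ : ℕ → G → X → X → ℝ) (Ω : ℕ → ℕ → Set X)
    (D C : ℕ → ℝ) (N : ℕ → ℕ) (fbd : ℕ → ℕ → ℝ)
    (hadm : IsRelAdmissible act (fun a b : X => dist a b) ν Υ Ω D C N fbd) :
    ∀ m : ℕ, ∀ f : X × ℝ → ℝ, Integrable f (ν.prod theta) → MemLp f ⊤ (ν.prod theta) →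
      Filter.limsup
          (fun n => ∫ p, |Wop ν Υ Ω n m (Function.curry f) p.1 p.2 - f p| ∂(ν.prod theta))
          atTop
        ≤ D m * (eLpNorm f ⊤ (ν.prod theta)).toReal := by
  intro m f hf hf_top
  obtain ⟨f', hf'_meas, hf'_bdd, hff'⟩ := hf_top.1.exists_measurable_abs_le_ae_eq
    ENNReal.toReal_nonneg hf_top.ae_abs_le_toReal_eLpNorm_top
  have hW : ∀ n, ∫ p, |Wop ν Υ Ω n m (Function.curry f) p.1 p.2 - f p| ∂ν.prod theta =
      ∫ p, |Wop ν Υ Ω n m (Function.curry f') p.1 p.2 - f' p| ∂ν.prod theta := fun n =>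
    integral_congr_ae <| by
      filter_upwards [Wop_congr_ae (Υ := Υ) (Ω := Ω) (n := n) (m := m) hff', hff']
        with p hWp hp
      rw [hWp, hp]
  simp only [hW]
  exact hadm.limsup_integral_abs_Wop_sub_le m hf'_meas (hf.congr hff') hf'_bdd

theorem stmt5 {G X : Type*} [Group G] [Countable G]
    [MetricSpace X] [CompactSpace X] [MeasurableSpace X] [BorelSpace X]
    (act : G → X → X) (hact_one : act 1 = id)
    (hact_mul : ∀ g h : G, act (g * h) = act g ∘ act h)
    (hact_meas : ∀ g : G, Measurable (act g))
    (ν : Measure X) [IsProbabilityMeasure ν]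
    (hqi : ∀ g : G, ν.map (act g) ≪ ν ∧ ν ≪ ν.map (act g))
    (Υ : ℕ → G → X → X → ℝ) (Ω : ℕ → ℕ → Set X)
    (D C : ℕ → ℝ) (N : ℕ → ℕ) (fbd : ℕ → ℕ → ℝ)
    (hadm : IsRelAdmissible act (fun a b : X => dist a b) ν Υ Ω D C N fbd) :
    ∀ m : ℕ, ∀ f : X × ℝ → ℝ, Integrable f (ν.prod theta) → MemLp f ⊤ (ν.prod theta) →
      Filter.limsup
          (fun n => ∫ p, |Wop ν Υ Ω n m (Function.curry f) p.1 p.2 - f p| ∂(ν.prod theta))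
          atTop
        ≤ D m * (eLpNorm f ⊤ (ν.prod theta)).toReal :=
  stmt5_general act ν Υ Ω D C N fbd hadm
end StableRatio
end

section
/- Suppose the family Υ_n is admissible relative to the sets Ω(n,m) for G ↷ (X,ν). Let (K, d_K) be a compact metric space with Borel probability measure κ and a continuous κ-preserving G-action such that 1/3 ≤ κ(B(x,ε))/κ(B(y,ε)) ≤ 3 for every ε > 0 and all x,y ∈ K, where B(x,ε) = {z : d_K(x,z) ≤ ε}. For each integer n ≥ 1 and g ∈ G choose 0 < ρ(n,g) < 1/n such that d_K(x,y) ≤ ρ(n,g) implies d_K(g⁻¹x, g⁻¹y) ≤ 1/n. Define Υ'_n(g,b,k,b',k') = 1_{B(k,ρ(n,g))}(k') Υ_n(g,b,b') / κ(B(k,ρ(n,g))). Then the family Υ'_n is admissible relative to the sets Ω(n,m) × K for the diagonal action G ↷ (X × K, ν × κ), where X × K carries the metric d_{X×K}((b,k),(b',k')) = d(b,b') + d_K(k,k'). -/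
/-!
Write `H(k,k') = 1_{B(k,ρ)}(k') / κ(B(k,ρ))`, so that `Υ'_n = Υ_n ⊗ H`. For each `k`,
`∫ H(k,·) dκ = 1`, and the comparability of the κ-measures of balls of equal radius gives
`∫ H(·,k') dκ ≤ 3`. Since κ is invariant, the Radon–Nikodym cocycle of the diagonal action is
that of `G ↷ X` composed with the first projection. By Tonelli, each integral condition for
`Υ'_n` then reduces to the same condition for `Υ_n`, at the cost of a factor at most 3. The
closeness condition costs an extra `2/(n+1)`, since `k' ∈ B(k,ρ(n,g))` forces both
`d(k,k') < 1/(n+1)` and `d(g⁻¹k,g⁻¹k') ≤ 1/(n+1)`.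
-/

open MeasureTheory Filter Metric Set
open scoped ENNReal

namespace StableRatio

variable {G : Type*} [Group G] [Countable G]

section BallKernel

variable {K : Type*} [PseudoMetricSpace K] [MeasurableSpace K] (κ : Measure K) (r : ℝ)

noncomputable def ballKernel (k k' : K) : ℝ≥0∞ :=
  (closedBall k r).indicator (fun _ => (κ (closedBall k r))⁻¹) k'

variable [OpensMeasurableSpace K]

theorem measurableSet_closedBall_graph [SecondCountableTopology K] :
    MeasurableSet {z : K × K | z.2 ∈ closedBall z.1 r} :=
  (isClosed_le (continuous_snd.dist continuous_fst) continuous_const).measurableSet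

theorem measurable_measure_closedBall [SecondCountableTopology K] [SFinite κ] :
    Measurable fun k : K => κ (closedBall k r) :=
  measurable_measure_prodMk_left (measurableSet_closedBall_graph r)

theorem measurable_ballKernel [SecondCountableTopology K] [SFinite κ] :
    Measurable (Function.uncurry (ballKernel κ r)) :=
  ((measurable_measure_closedBall κ r).comp measurable_fst).inv.indicator
    (measurableSet_closedBall_graph r)

theorem measurable_ballKernel_left [SecondCountableTopology K] [SFinite κ] (k' : K) :
    Measurable fun k => ballKernel κ r k k' :=
  (measurable_ballKernel κ r).comp measurable_prodMk_right

theorem measurable_ballKernel_right [SecondCountableTopology K] [SFinite κ] (k : K) :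
    Measurable (ballKernel κ r k) :=
  (measurable_ballKernel κ r).comp measurable_prodMk_left

theorem lintegral_ballKernel_right [IsFiniteMeasure κ] {k : K}
    (h0 : κ (closedBall k r) ≠ 0) : ∫⁻ k', ballKernel κ r k k' ∂κ = 1 := by
  unfold ballKernel
  rw [lintegral_indicator_const measurableSet_closedBall,
    ENNReal.inv_mul_cancel h0 (measure_ne_top _ _)]

theorem lintegral_ballKernel_left_le [IsFiniteMeasure κ] {c : ℝ≥0∞}
    (hc : ∀ x y : K, κ (closedBall x r) ≤ c * κ (closedBall y r)) {k' : K}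
    (h0 : κ (closedBall k' r) ≠ 0) : ∫⁻ k, ballKernel κ r k k' ∂κ ≤ c := by
  have hpt : ∀ k, ballKernel κ r k k' ≤
      (closedBall k' r).indicator (fun _ => c * (κ (closedBall k' r))⁻¹) k := by
    intro k
    by_cases hk : k' ∈ closedBall k r
    · rw [ballKernel, indicator_of_mem hk, indicator_of_mem (mem_closedBall_comm.1 hk)]
      calc (κ (closedBall k r))⁻¹
          = (κ (closedBall k r))⁻¹ * (κ (closedBall k' r) * (κ (closedBall k' r))⁻¹) := by
            rw [ENNReal.mul_inv_cancel h0 (measure_ne_top _ _), mul_one]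
        _ ≤ (κ (closedBall k r))⁻¹ * (c * κ (closedBall k r) * (κ (closedBall k' r))⁻¹) := by
            gcongr; exact hc k' k
        _ = (κ (closedBall k r))⁻¹ * κ (closedBall k r) * (c * (κ (closedBall k' r))⁻¹) := by
            ring
        _ ≤ c * (κ (closedBall k' r))⁻¹ :=
            mul_le_of_le_one_left' (ENNReal.inv_mul_le_one _)
    · rw [ballKernel, indicator_of_notMem hk]
      exact zero_le
  calc ∫⁻ k, ballKernel κ r k k' ∂κ
      ≤ c * (κ (closedBall k' r))⁻¹ * κ (closedBall k' r) := by
        rw [← lintegral_indicator_const measurableSet_closedBall]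
        exact lintegral_mono hpt
    _ = c := by rw [mul_assoc, ENNReal.inv_mul_cancel h0 (measure_ne_top _ _), mul_one]

omit [OpensMeasurableSpace K] in
theorem measure_closedBall_ne_zero_of_le_mul [CompactSpace K] [NeZero κ] {c : ℝ≥0∞}
    (hr : 0 < r) (hc : ∀ x y : K, κ (closedBall x r) ≤ c * κ (closedBall y r)) (x : K) :
    κ (closedBall x r) ≠ 0 := by
  intro h0
  have hnull : ∀ y, κ (ball y r) = 0 := fun y =>
    measure_mono_null ball_subset_closedBall
      (le_antisymm ((hc y x).trans (by rw [h0, mul_zero])) zero_le)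
  obtain ⟨t, -, ht, hcover⟩ := finite_cover_balls_of_compact (isCompact_univ (X := K)) hr
  exact NeZero.ne κ (Measure.measure_univ_eq_zero.1 (measure_mono_null hcover
    ((measure_biUnion_null_iff ht.countable).2 fun y _ => hnull y)))

end BallKernel

section Product

variable {X K : Type*} [MeasurableSpace X] [MeasurableSpace K]

theorem rnDeriv_prod_left (μ ν : Measure X) [IsFiniteMeasure μ] [IsFiniteMeasure ν]
    (κ : Measure K) [IsFiniteMeasure κ] :
    (μ.prod κ).rnDeriv (ν.prod κ) =ᵐ[ν.prod κ] fun p => μ.rnDeriv ν p.1 := by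
  simpa only [Measure.compProd_const] using
    ProbabilityTheory.rnDeriv_measure_compProd_left μ ν (ProbabilityTheory.Kernel.const X κ)

theorem lintegral_prod_tsum_mul_le {ι : Type*} [Countable ι] (μ : Measure X) (κ : Measure K)
    [SFinite κ] {F : ι → X → ℝ≥0∞} {H : ι → K → ℝ≥0∞} (hF : ∀ i, Measurable (F i))
    (hH : ∀ i, Measurable (H i)) {c : ℝ≥0∞} (hc : ∀ i, ∫⁻ k, H i k ∂κ ≤ c) :
    ∫⁻ p, ∑' i, F i p.1 * H i p.2 ∂(μ.prod κ) ≤ c * ∫⁻ x, ∑' i, F i x ∂μ := by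
  rw [lintegral_tsum fun i => by fun_prop, lintegral_tsum fun i => (hF i).aemeasurable,
    ← ENNReal.tsum_mul_left]
  refine ENNReal.tsum_le_tsum fun i => ?_
  rw [lintegral_prod_mul (hF i).aemeasurable (hH i).aemeasurable, mul_comm]
  gcongr
  exact hc i

end Product

section DiagonalAction

variable {X K : Type*} [MeasurableSpace X] [MeasurableSpace K] {act : G → X → X}
  {aK : G → K → K} (ν : Measure X) (κ : Measure K) [IsFiniteMeasure ν] [IsFiniteMeasure κ]

theorem ae_RN_prod_eq (hact : ∀ g, Measurable (act g)) (haK : ∀ g, Measurable (aK g))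
    (hpres : ∀ g, κ.map (aK g) = κ) :
    ∀ᵐ z ∂(ν.prod κ), ∀ g : G,
      RN (fun g (p : X × K) => (act g p.1, aK g p.2)) (ν.prod κ) g z = RN act ν g z.1 := by
  refine ae_all_iff.2 fun g => ?_
  have hmap : (ν.prod κ).map (fun p : X × K => (act g⁻¹ p.1, aK g⁻¹ p.2))
      = (ν.map (act g⁻¹)).prod κ := by
    conv_rhs => rw [← hpres g⁻¹]
    exact (Measure.map_prod_map ν κ (hact g⁻¹) (haK g⁻¹)).symm
  filter_upwards [rnDeriv_prod_left (ν.map (act g⁻¹)) ν κ] with z hz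
  simp only [RN, hmap, hz]

theorem ae_Rlog_prod_eq (hact : ∀ g, Measurable (act g)) (haK : ∀ g, Measurable (aK g))
    (hpres : ∀ g, κ.map (aK g) = κ) :
    ∀ᵐ z ∂(ν.prod κ), ∀ g : G,
      Rlog (fun g (p : X × K) => (act g p.1, aK g p.2)) (ν.prod κ) g z = Rlog act ν g z.1 := by
  filter_upwards [ae_RN_prod_eq ν κ hact haK hpres] with z hz g
  rw [Rlog, Rlog, hz g]

end DiagonalAction

section BallLift

variable {ι X K : Type*} [PseudoMetricSpace K] [MeasurableSpace K]

/-- The family `Υ'_n`, with `p = (b,k)` and `q = (b',k')`. -/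
noncomputable def ballLift (κ : Measure K) (ρ : ℕ → ι → ℝ) (Υ : ℕ → ι → X → X → ℝ) (n : ℕ)
    (g : ι) (p q : X × K) : ℝ :=
  (closedBall p.2 (ρ n g)).indicator (fun _ => (1 : ℝ)) q.2 * Υ n g p.1 q.1
    / (κ (closedBall p.2 (ρ n g))).toReal

variable {κ : Measure K} {ρ : ℕ → ι → ℝ} {Υ : ℕ → ι → X → X → ℝ} {n : ℕ} {g : ι} {p q : X × K}

theorem ballLift_nonneg (hΥ : 0 ≤ Υ n g p.1 q.1) : 0 ≤ ballLift κ ρ Υ n g p q :=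
  div_nonneg (mul_nonneg (indicator_nonneg (fun _ _ => zero_le_one) _) hΥ) ENNReal.toReal_nonneg

theorem pos_of_ballLift_pos (h : 0 < ballLift κ ρ Υ n g p q) :
    0 < Υ n g p.1 q.1 ∧ dist q.2 p.2 ≤ ρ n g := by
  by_cases hq : q.2 ∈ closedBall p.2 (ρ n g)
  · rw [ballLift, indicator_of_mem hq, one_mul] at h
    exact ⟨((div_pos_iff.1 h).resolve_right fun h' => h'.2.not_ge ENNReal.toReal_nonneg).1, hq⟩
  · simp [ballLift, indicator_of_notMem hq] at h

theorem ofReal_ballLift [IsFiniteMeasure κ] (h0 : κ (closedBall p.2 (ρ n g)) ≠ 0) :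
    ENNReal.ofReal (ballLift κ ρ Υ n g p q)
      = ENNReal.ofReal (Υ n g p.1 q.1) * ballKernel κ (ρ n g) p.2 q.2 := by
  by_cases hq : q.2 ∈ closedBall p.2 (ρ n g)
  · rw [ballLift, ballKernel, indicator_of_mem hq, indicator_of_mem hq, one_mul,
      ENNReal.ofReal_div_of_pos (ENNReal.toReal_pos h0 (measure_ne_top _ _)),
      ENNReal.ofReal_toReal (measure_ne_top _ _), div_eq_mul_inv]
  · simp [ballLift, ballKernel, indicator_of_notMem hq]

theorem measurable_ballLift [MeasurableSpace X] [SecondCountableTopology K]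
    [OpensMeasurableSpace K] [SFinite κ] (hΥ : Measurable (Function.uncurry (Υ n g))) :
    Measurable (Function.uncurry (ballLift κ ρ Υ n g)) := by
  have hind : Measurable fun z : (X × K) × (X × K) =>
      (closedBall z.1.2 (ρ n g)).indicator (fun _ => (1 : ℝ)) z.2.2 :=
    (measurable_const.indicator (measurableSet_closedBall_graph (ρ n g))).comp
      (measurable_fst.snd.prodMk measurable_snd.snd)
  exact (hind.mul (hΥ.comp (measurable_fst.fst.prodMk measurable_snd.fst))).div
    ((measurable_measure_closedBall κ _).comp measurable_fst.snd).ennreal_toReal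

theorem dist_lt_of_ballLift_pos [PseudoMetricSpace X] {φ : X → X} {ψ : K → K} {ε f : ℝ}
    (hρ : ρ n g < ε) (hψ : ∀ x y, dist x y ≤ ρ n g → dist (ψ x) (ψ y) ≤ ε)
    (hclose : 0 < Υ n g p.1 q.1 → dist p.1 q.1 < f ∧ dist (φ p.1) (φ q.1) < f)
    (hpos : 0 < ballLift κ ρ Υ n g p q) :
    dist p.1 q.1 + dist p.2 q.2 < f + 2 * ε ∧
      dist (φ p.1) (φ q.1) + dist (ψ p.2) (ψ q.2) < f + 2 * ε := by
  obtain ⟨hΥ, hq⟩ := pos_of_ballLift_pos hpos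
  obtain ⟨h1, h2⟩ := hclose hΥ
  rw [dist_comm] at hq
  have := hψ _ _ hq
  constructor <;> linarith [dist_nonneg (x := p.2) (y := q.2)]

end BallLift

section BallLiftIntegrals

variable {ι X K : Type*} [MeasurableSpace X] [PseudoMetricSpace K]
  [MeasurableSpace K] [SecondCountableTopology K] [OpensMeasurableSpace K]
  {κ : Measure K} [IsFiniteMeasure κ] (ν : Measure X) {ρ : ℕ → ι → ℝ}
  {Υ : ℕ → ι → X → X → ℝ} {n : ℕ}

theorem setLIntegral_tsum_ballLift_le [Countable ι] [SFinite ν] {c : ℝ≥0∞} (s : Set X)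
    (a : ι → X) (k' : ι → K) (w : ι → ℝ≥0∞) (hΥ : ∀ g, Measurable (Function.uncurry (Υ n g)))
    (hκ0 : ∀ g k, κ (closedBall k (ρ n g)) ≠ 0)
    (hc : ∀ g x y, κ (closedBall x (ρ n g)) ≤ c * κ (closedBall y (ρ n g))) :
    ∫⁻ p in s ×ˢ univ, ∑' g, ENNReal.ofReal (ballLift κ ρ Υ n g p (a g, k' g)) * w g
        ∂(ν.prod κ)
      ≤ c * ∫⁻ b in s, ∑' g, ENNReal.ofReal (Υ n g b (a g)) * w g ∂ν := by
  rw [← Measure.restrict_prod_eq_prod_univ]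
  calc _ = ∫⁻ p, ∑' g, ENNReal.ofReal (Υ n g p.1 (a g)) * w g * ballKernel κ (ρ n g) p.2 (k' g)
          ∂((ν.restrict s).prod κ) :=
        lintegral_congr fun p => tsum_congr fun g => by
          rw [ofReal_ballLift (hκ0 g p.2), mul_right_comm]
    _ ≤ _ := lintegral_prod_tsum_mul_le _ _
        (fun g => ((hΥ g).comp measurable_prodMk_right).ennreal_ofReal.mul_const _)
        (fun g => measurable_ballKernel_left κ _ _)
        fun g => lintegral_ballKernel_left_le κ _ (hc g) (hκ0 g _)

theorem lintegral_ballLift_mul (g : ι) (p : X × K) {w : X → ℝ≥0∞} (hw : Measurable w)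
    (hΥ : Measurable (Function.uncurry (Υ n g))) (h0 : κ (closedBall p.2 (ρ n g)) ≠ 0) :
    ∫⁻ q, ENNReal.ofReal (ballLift κ ρ Υ n g p q) * w q.1 ∂(ν.prod κ)
      = ∫⁻ b', ENNReal.ofReal (Υ n g p.1 b') * w b' ∂ν := by
  calc _ = ∫⁻ q, ENNReal.ofReal (Υ n g p.1 q.1) * w q.1 * ballKernel κ (ρ n g) p.2 q.2
          ∂(ν.prod κ) :=
        lintegral_congr fun q => by rw [ofReal_ballLift h0, mul_right_comm]
    _ = _ := by
      rw [lintegral_prod_mul (f := fun b' => ENNReal.ofReal (Υ n g p.1 b') * w b')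
          ((hΥ.comp measurable_prodMk_left).ennreal_ofReal.mul hw).aemeasurable
          (measurable_ballKernel_right κ _ _).aemeasurable,
        lintegral_ballKernel_right κ _ h0, mul_one]

theorem lintegral_tsum_ballLift_mul [Countable ι] (a : ι → X × K) (e : ι → ℝ≥0∞) {w : ι → X → ℝ≥0∞}
    (hw : ∀ g, Measurable (w g)) (hΥ : ∀ g, Measurable (Function.uncurry (Υ n g)))
    (hκ0 : ∀ g k, κ (closedBall k (ρ n g)) ≠ 0) :
    ∫⁻ q, ∑' g, e g * (ENNReal.ofReal (ballLift κ ρ Υ n g (a g) q) * w g q.1) ∂(ν.prod κ)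
      = ∫⁻ b', ∑' g, e g * (ENNReal.ofReal (Υ n g (a g).1 b') * w g b') ∂ν := by
  have hΥ' : ∀ g, Measurable fun b' => ENNReal.ofReal (Υ n g (a g).1 b') * w g b' :=
    fun g => ((hΥ g).comp measurable_prodMk_left).ennreal_ofReal.mul (hw g)
  have hlift : ∀ g, Measurable fun q : X × K =>
      ENNReal.ofReal (ballLift κ ρ Υ n g (a g) q) * w g q.1 := fun g =>
    ((measurable_ballLift (hΥ g)).comp measurable_prodMk_left).ennreal_ofReal.mul
      ((hw g).comp measurable_fst)
  rw [lintegral_tsum fun g => ((hlift g).const_mul (e g)).aemeasurable,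
    lintegral_tsum fun g => ((hΥ' g).const_mul (e g)).aemeasurable]
  refine tsum_congr fun g => ?_
  rw [lintegral_const_mul _ (hlift g), lintegral_const_mul _ (hΥ' g),
    lintegral_ballLift_mul ν g (a g) (hw g) (hΥ g) (hκ0 g _)]

theorem tsum_lintegral_ballLift [Countable ι] (p : X × K)
    (hΥ : ∀ g, Measurable (Function.uncurry (Υ n g)))
    (hκ0 : ∀ g, κ (closedBall p.2 (ρ n g)) ≠ 0) :
    ∑' g, ∫⁻ q, ENNReal.ofReal (ballLift κ ρ Υ n g p q) ∂(ν.prod κ)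
      = ∑' g, ∫⁻ b', ENNReal.ofReal (Υ n g p.1 b') ∂ν :=
  tsum_congr fun g => by
    simpa only [Pi.one_apply, mul_one] using
      lintegral_ballLift_mul ν g p (w := 1) measurable_const (hΥ g) (hκ0 g)

theorem ae_setLIntegral_tsum_ballLift_le [Countable ι] [SFinite ν] (s : Set X)
    (hΥ : ∀ g, Measurable (Function.uncurry (Υ n g)))
    (hκ0 : ∀ g k, κ (closedBall k (ρ n g)) ≠ 0)
    (h3 : ∀ g x y, κ (closedBall x (ρ n g)) ≤ 3 * κ (closedBall y (ρ n g))) {c : ℝ}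
    (h : ∀ᵐ b' ∂ν, ∫⁻ b in s, ∑' g, ENNReal.ofReal (Υ n g b b') ∂ν ≤ ENNReal.ofReal c) :
    ∀ᵐ q ∂(ν.prod κ), ∫⁻ p in s ×ˢ univ, ∑' g, ENNReal.ofReal (ballLift κ ρ Υ n g p q)
      ∂(ν.prod κ) ≤ ENNReal.ofReal (3 * c) := by
  filter_upwards [Measure.quasiMeasurePreserving_fst.ae h] with q hq
  calc _ ≤ 3 * ∫⁻ b in s, ∑' g, ENNReal.ofReal (Υ n g b q.1) ∂ν := by
        simpa only [mul_one] using
          setLIntegral_tsum_ballLift_le ν s (fun _ => q.1) (fun _ => q.2) (fun _ => 1) hΥ hκ0 h3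
    _ ≤ 3 * ENNReal.ofReal c := by gcongr
    _ = ENNReal.ofReal (3 * c) := by rw [ENNReal.ofReal_mul zero_le_three, ENNReal.ofReal_ofNat]

end BallLiftIntegrals

section DiagonalBallLift

variable {X K : Type*} [MeasurableSpace X] [PseudoMetricSpace K] [MeasurableSpace K]
  {act : G → X → X} {aK : G → K → K}
  (ν : Measure X) (κ : Measure K) [IsFiniteMeasure ν] [IsFiniteMeasure κ]
  {ρ : ℕ → G → ℝ} {Υ : ℕ → G → X → X → ℝ} {n : ℕ}

theorem ae_setLIntegral_tsum_ballLift_RN_le [SecondCountableTopology K] [OpensMeasurableSpace K]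
    (hact : ∀ g, Measurable (act g)) (haK : ∀ g, Measurable (aK g))
    (hpres : ∀ g, κ.map (aK g) = κ) (s : Set X)
    (hΥ : ∀ g, Measurable (Function.uncurry (Υ n g))) (hΥ0 : ∀ g b b', 0 ≤ Υ n g b b')
    (hκ0 : ∀ g k, κ (closedBall k (ρ n g)) ≠ 0)
    (h3 : ∀ g x y, κ (closedBall x (ρ n g)) ≤ 3 * κ (closedBall y (ρ n g))) {c : ℝ}
    (h : ∀ᵐ b' ∂ν, ∫⁻ b in s, ∑' g, ENNReal.ofReal (Υ n g b (act g b') * RN act ν g b') ∂ν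
      ≤ ENNReal.ofReal c) :
    ∀ᵐ q ∂(ν.prod κ), ∫⁻ p in s ×ˢ univ, ∑' g, ENNReal.ofReal
        (ballLift κ ρ Υ n g p (act g q.1, aK g q.2)
          * RN (fun g (p : X × K) => (act g p.1, aK g p.2)) (ν.prod κ) g q) ∂(ν.prod κ)
      ≤ ENNReal.ofReal (3 * c) := by
  filter_upwards [Measure.quasiMeasurePreserving_fst.ae h, ae_RN_prod_eq ν κ hact haK hpres]
    with q hq hRN
  calc _ = ∫⁻ p in s ×ˢ univ, ∑' g, ENNReal.ofReal (ballLift κ ρ Υ n g p (act g q.1, aK g q.2))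
          * ENNReal.ofReal (RN act ν g q.1) ∂(ν.prod κ) :=
        lintegral_congr fun p => tsum_congr fun g => by
          rw [hRN g, ENNReal.ofReal_mul (ballLift_nonneg (hΥ0 _ _ _))]
    _ ≤ 3 * ∫⁻ b in s, ∑' g, ENNReal.ofReal (Υ n g b (act g q.1))
          * ENNReal.ofReal (RN act ν g q.1) ∂ν :=
        setLIntegral_tsum_ballLift_le ν s _ _ _ hΥ hκ0 h3
    _ ≤ 3 * ENNReal.ofReal c := by
        gcongr
        simpa only [ENNReal.ofReal_mul (hΥ0 _ _ _)] using hq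
    _ = ENNReal.ofReal (3 * c) := by rw [ENNReal.ofReal_mul zero_le_three, ENNReal.ofReal_ofNat]

theorem ae_lintegral_tsum_indicator_ballLift_RN_le [SecondCountableTopology K]
    [OpensMeasurableSpace K] (hact : ∀ g, Measurable (act g))
    (haK : ∀ g, Measurable (aK g)) (hpres : ∀ g, κ.map (aK g) = κ) (s : Set X)
    (hΥ : ∀ g, Measurable (Function.uncurry (Υ n g))) (hΥ0 : ∀ g b b', 0 ≤ Υ n g b b')
    (hκ0 : ∀ g k, κ (closedBall k (ρ n g)) ≠ 0) {c : ℝ}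
    (h : ∀ᵐ b ∂ν, ∫⁻ b', ∑' g, s.indicator (fun _ => (1 : ℝ≥0∞)) (act g b)
      * ENNReal.ofReal (Υ n g (act g b) b' * RN act ν g b') ∂ν ≤ ENNReal.ofReal c) :
    ∀ᵐ p ∂(ν.prod κ), ∫⁻ q, ∑' g, (s ×ˢ univ).indicator (fun _ => (1 : ℝ≥0∞))
        (act g p.1, aK g p.2) * ENNReal.ofReal (ballLift κ ρ Υ n g (act g p.1, aK g p.2) q
          * RN (fun g (p : X × K) => (act g p.1, aK g p.2)) (ν.prod κ) g q) ∂(ν.prod κ)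
      ≤ ENNReal.ofReal c := by
  filter_upwards [Measure.quasiMeasurePreserving_fst.ae h] with p hp
  calc _ = ∫⁻ q, ∑' g, s.indicator (fun _ => (1 : ℝ≥0∞)) (act g p.1)
          * (ENNReal.ofReal (ballLift κ ρ Υ n g (act g p.1, aK g p.2) q)
            * ENNReal.ofReal (RN act ν g q.1)) ∂(ν.prod κ) := by
        refine lintegral_congr_ae ?_
        filter_upwards [ae_RN_prod_eq ν κ hact haK hpres] with q hRN
        refine tsum_congr fun g => ?_
        rw [hRN g, ENNReal.ofReal_mul (ballLift_nonneg (hΥ0 _ _ _))]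
        by_cases hs : act g p.1 ∈ s <;> simp [hs]
    _ = ∫⁻ b', ∑' g, s.indicator (fun _ => (1 : ℝ≥0∞)) (act g p.1)
          * (ENNReal.ofReal (Υ n g (act g p.1) b') * ENNReal.ofReal (RN act ν g b')) ∂ν :=
        lintegral_tsum_ballLift_mul ν _ _
          (fun g => (Measure.measurable_rnDeriv _ _).ennreal_toReal.ennreal_ofReal) hΥ hκ0
    _ ≤ ENNReal.ofReal c := by simpa only [ENNReal.ofReal_mul (hΥ0 _ _ _)] using hp

theorem ae_Rlog_bound_ballLift (hact : ∀ g, Measurable (act g)) (haK : ∀ g, Measurable (aK g))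
    (hpres : ∀ g, κ.map (aK g) = κ) {s : Set X} {c : ℝ} (hc : 0 < c) {g : G}
    (h : ∀ᵐ p ∂(ν.prod ν), p.1 ∈ s → 0 < Υ n g p.1 p.2 →
      |Rlog act ν g⁻¹ p.1| + |Rlog act ν g⁻¹ p.2| < c ∧
        1 / c ≤ |Rlog act ν g⁻¹ p.1 - Rlog act ν g⁻¹ p.2|) :
    ∀ᵐ p ∂((ν.prod κ).prod (ν.prod κ)), p.1 ∈ s ×ˢ univ → 0 < ballLift κ ρ Υ n g p.1 p.2 →
      |Rlog (fun g (p : X × K) => (act g p.1, aK g p.2)) (ν.prod κ) g⁻¹ p.1|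
          + |Rlog (fun g (p : X × K) => (act g p.1, aK g p.2)) (ν.prod κ) g⁻¹ p.2| < 3 * c ∧
        1 / (3 * c) ≤ |Rlog (fun g (p : X × K) => (act g p.1, aK g p.2)) (ν.prod κ) g⁻¹ p.1
          - Rlog (fun g (p : X × K) => (act g p.1, aK g p.2)) (ν.prod κ) g⁻¹ p.2| := by
  have hR := ae_Rlog_prod_eq ν κ hact haK hpres
  have hfst : Measure.QuasiMeasurePreserving (Prod.map Prod.fst Prod.fst)
      ((ν.prod κ).prod (ν.prod κ)) (ν.prod ν) :=
    QuasiMeasurePreserving.prodMap Measure.quasiMeasurePreserving_fst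
      Measure.quasiMeasurePreserving_fst
  filter_upwards [hfst.ae h, Measure.quasiMeasurePreserving_fst.ae hR,
    Measure.quasiMeasurePreserving_snd.ae hR] with p hX h1 h2 hs hpos
  obtain ⟨hsum, hdiff⟩ := hX hs.1 (pos_of_ballLift_pos hpos).1
  rw [h1, h2]
  exact ⟨hsum.trans (by linarith), (one_div_le_one_div_of_le hc (by linarith)).trans hdiff⟩

end DiagonalBallLift

theorem stmt12_general {G X : Type*} [Group G] [Countable G]
    [MetricSpace X] [MeasurableSpace X]
    (act : G → X → X)
    (hact_meas : ∀ g : G, Measurable (act g))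
    (ν : Measure X) [IsProbabilityMeasure ν]
    (Υ : ℕ → G → X → X → ℝ) (Ω : ℕ → ℕ → Set X)
    (D C : ℕ → ℝ) (N : ℕ → ℕ) (fbd : ℕ → ℕ → ℝ)
    (hadm : IsRelAdmissible act (fun a b : X => dist a b) ν Υ Ω D C N fbd)
    {K : Type*} [MetricSpace K] [CompactSpace K] [MeasurableSpace K] [BorelSpace K]
    (κ : Measure K) [IsProbabilityMeasure κ]
    (aK : G → K → K)
    (haK_meas : ∀ g : G, Measurable (aK g))
    (haK_pres : ∀ g : G, κ.map (aK g) = κ)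
    (hball : ∀ ε : ℝ, 0 < ε → ∀ x y : K,
      κ (Metric.closedBall x ε) ≤ 3 * κ (Metric.closedBall y ε))
    (ρ : ℕ → G → ℝ)
    (hρ : ∀ (n : ℕ) (g : G), 0 < ρ n g ∧ ρ n g < 1 / (n + 1) ∧
      ∀ x y : K, dist x y ≤ ρ n g → dist (aK g⁻¹ x) (aK g⁻¹ y) ≤ 1 / (n + 1)) :
    ∃ (D' C' : ℕ → ℝ) (N' : ℕ → ℕ) (f' : ℕ → ℕ → ℝ),
      IsRelAdmissible (fun g (p : X × K) => (act g p.1, aK g p.2))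
        (fun p q : X × K => dist p.1 q.1 + dist p.2 q.2) (ν.prod κ)
        (fun (n : ℕ) (g : G) (p q : X × K) =>
      (Set.indicator (Metric.closedBall p.2 (ρ n g)) (fun _ => (1 : ℝ)) q.2 * Υ n g p.1 q.1)
        / (κ (Metric.closedBall p.2 (ρ n g))).toReal)
        (fun n m => Ω n m ×ˢ (Set.univ : Set K)) D' C' N' f' := by
  have h3 : ∀ n g x y, κ (closedBall x (ρ n g)) ≤ 3 * κ (closedBall y (ρ n g)) := fun n g =>
    hball _ (hρ n g).1
  have hκ0 : ∀ n g k, κ (closedBall k (ρ n g)) ≠ 0 := fun n g =>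
    measure_closedBall_ne_zero_of_le_mul κ _ (hρ n g).1 (h3 n g)
  refine ⟨D, fun m => 3 * C m, N, fun m n => fbd m n + 2 * (1 / (n + 1)), ?_⟩
  exact
  { meas_Υ := fun n g => measurable_ballLift (hadm.meas_Υ n g)
    nonneg_Υ := fun n g p q => ballLift_nonneg (hadm.nonneg_Υ n g _ _)
    closed_Ω := fun n m => (hadm.closed_Ω n m).prod isClosed_univ
    D_pos := hadm.D_pos
    D_lim := hadm.D_lim
    Ω_big := fun n m => by simpa [Measure.prod_prod] using hadm.Ω_big n m
    f_lim := fun m => by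
      simpa using (hadm.f_lim m).add (tendsto_one_div_add_atTop_nhds_zero_nat.const_mul 2)
    close := fun n m g p q hp hpos => dist_lt_of_ballLift_pos (hρ n g).2.1 (hρ n g).2.2
      (hadm.close n m g p.1 q.1 hp.1) hpos
    C_pos := fun m => mul_pos three_pos (hadm.C_pos m)
    N_pos := hadm.N_pos
    R_bound := fun m n hn g => ae_Rlog_bound_ballLift ν κ hact_meas haK_meas haK_pres
      (hadm.C_pos m) (hadm.R_bound m n hn g)
    normalized := fun n p => (tsum_lintegral_ballLift ν p (hadm.meas_Υ n)
      (fun g => hκ0 n g p.2)).trans (hadm.normalized n p.1)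
    bdd₁ := fun m n hn => ae_setLIntegral_tsum_ballLift_le ν _ (hadm.meas_Υ n) (hκ0 n) (h3 n)
      (hadm.bdd₁ m n hn)
    bdd₂ := fun m n hn => ae_setLIntegral_tsum_ballLift_RN_le ν κ hact_meas haK_meas haK_pres _
      (hadm.meas_Υ n) (hadm.nonneg_Υ n) (hκ0 n) (h3 n) (hadm.bdd₂ m n hn)
    bdd₃ := fun m n hn => (ae_lintegral_tsum_indicator_ballLift_RN_le ν κ hact_meas haK_meas
      haK_pres _ (hadm.meas_Υ n) (hadm.nonneg_Υ n) (hκ0 n) (hadm.bdd₃ m n hn)).mono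
        fun p hp => hp.trans (ENNReal.ofReal_le_ofReal (by linarith [hadm.C_pos m])) }

theorem stmt12 {G X : Type*} [Group G] [Countable G]
    [MetricSpace X] [CompactSpace X] [MeasurableSpace X] [BorelSpace X]
    (act : G → X → X) (hact_one : act 1 = id)
    (hact_mul : ∀ g h : G, act (g * h) = act g ∘ act h)
    (hact_meas : ∀ g : G, Measurable (act g))
    (ν : Measure X) [IsProbabilityMeasure ν]
    (hqi : ∀ g : G, ν.map (act g) ≪ ν ∧ ν ≪ ν.map (act g))
    (Υ : ℕ → G → X → X → ℝ) (Ω : ℕ → ℕ → Set X)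
    (D C : ℕ → ℝ) (N : ℕ → ℕ) (fbd : ℕ → ℕ → ℝ)
    (hadm : IsRelAdmissible act (fun a b : X => dist a b) ν Υ Ω D C N fbd)
    {K : Type*} [MetricSpace K] [CompactSpace K] [MeasurableSpace K] [BorelSpace K]
    (κ : Measure K) [IsProbabilityMeasure κ]
    (aK : G → K → K) (haK_one : aK 1 = id)
    (haK_mul : ∀ g h : G, aK (g * h) = aK g ∘ aK h)
    (haK_cont : ∀ g : G, Continuous (aK g))
    (haK_meas : ∀ g : G, Measurable (aK g))
    (haK_pres : ∀ g : G, κ.map (aK g) = κ)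
    (hball : ∀ ε : ℝ, 0 < ε → ∀ x y : K,
      κ (Metric.closedBall x ε) ≤ 3 * κ (Metric.closedBall y ε))
    (ρ : ℕ → G → ℝ)
    (hρ : ∀ (n : ℕ) (g : G), 0 < ρ n g ∧ ρ n g < 1 / (n + 1) ∧
      ∀ x y : K, dist x y ≤ ρ n g → dist (aK g⁻¹ x) (aK g⁻¹ y) ≤ 1 / (n + 1)) :
    ∃ (D' C' : ℕ → ℝ) (N' : ℕ → ℕ) (f' : ℕ → ℕ → ℝ),
      IsRelAdmissible (fun g (p : X × K) => (act g p.1, aK g p.2))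
        (fun p q : X × K => dist p.1 q.1 + dist p.2 q.2) (ν.prod κ)
        (fun (n : ℕ) (g : G) (p q : X × K) =>
      (Set.indicator (Metric.closedBall p.2 (ρ n g)) (fun _ => (1 : ℝ)) q.2 * Υ n g p.1 q.1)
        / (κ (Metric.closedBall p.2 (ρ n g))).toReal)
        (fun n m => Ω n m ×ˢ (Set.univ : Set K)) D' C' N' f' :=
  stmt12_general act hact_meas ν Υ Ω D C N fbd hadm κ aK haK_meas haK_pres hball ρ hρ

end StableRatio
end

section
/- Suppose the family Υ_n is admissible relative to the sets Ω(n,m) for G ↷ (X,ν). Let T ∈ ℝ and ε > 0, and let A ⊆ X × ℝ be a measurable set such that for every (b,t) ∈ A and every t' ∈ (T−ε, T+ε), the point (b, t+t') is not in A. Then, with f = 1_A, for every n and m one has ‖f − L_{n,m}f‖_{L¹(ν×θ)} ≥ ∫∫ 1_A(b,t) 1_{Ω(n,m)}(b) ζ_{n,m,b}((T−ε, T+ε)) dν(b) dθ(t), where for each b ∈ X the probability measure ζ_{n,m,b} on ℝ is defined by ζ_{n,m,b}(E) = Σ_{g∈G} ∫ 1_E(R(g⁻¹,b') − R(g⁻¹,b))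 Υ_n(g,b,b') dν(b'). -/
open MeasureTheory Filter Metric Set
open scoped ENNReal

namespace StableRatio

variable {G : Type*} [Group G] [Countable G]

private lemma ofReal_indicator_one' {α : Type*} (S : Set α) (y : α) :
    ENNReal.ofReal (Set.indicator S (fun _ => (1:ℝ)) y)
      = Set.indicator S (fun _ => (1:ℝ≥0∞)) y := by
  by_cases h : y ∈ S <;> simp [h]

private lemma integrable_exp_neg_abs' : Integrable (fun t : ℝ => Real.exp (-|t|)) volume := by
  have h1 : IntegrableOn (fun t : ℝ => Real.exp (-|t|)) (Set.Iic 0) volume :=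
    (integrableOn_exp_Iic 0).congr_fun
      (fun x hx => by simp only [abs_of_nonpos (Set.mem_Iic.mp hx), neg_neg]) measurableSet_Iic
  have h2 : IntegrableOn (fun t : ℝ => Real.exp (-|t|)) (Set.Ioi 0) volume :=
    (exp_neg_integrableOn_Ioi 0 one_pos).congr_fun
      (fun x hx => by simp only [neg_one_mul, abs_of_pos (Set.mem_Ioi.mp hx)]) measurableSet_Ioi
  have h3 := h1.union h2
  rwa [Set.Iic_union_Ioi, integrableOn_univ] at h3

instance : IsFiniteMeasure theta := by
  constructor
  unfold theta
  rw [withDensity_apply _ MeasurableSet.univ, Measure.restrict_univ]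
  have hint : Integrable (fun t : ℝ => (1/2 : ℝ) * Real.exp (-|t|)) volume :=
    integrable_exp_neg_abs'.const_mul _
  calc ∫⁻ t, ENNReal.ofReal ((1/2 : ℝ) * Real.exp (-|t|)) ∂volume
      ≤ ∫⁻ t, (‖(1/2 : ℝ) * Real.exp (-|t|)‖₊ : ℝ≥0∞) ∂volume :=
        lintegral_mono fun t => Real.ofReal_le_enorm _
    _ < ⊤ := hint.2

theorem stmt17 {G X : Type*} [Group G] [Countable G]
    [MetricSpace X] [CompactSpace X] [MeasurableSpace X] [BorelSpace X]
    (act : G → X → X) (hact_one : act 1 = id)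
    (hact_mul : ∀ g h : G, act (g * h) = act g ∘ act h)
    (hact_meas : ∀ g : G, Measurable (act g))
    (ν : Measure X) [IsProbabilityMeasure ν]
    (hqi : ∀ g : G, ν.map (act g) ≪ ν ∧ ν ≪ ν.map (act g))
    (Υ : ℕ → G → X → X → ℝ) (Ω : ℕ → ℕ → Set X)
    (D C : ℕ → ℝ) (N : ℕ → ℕ) (fbd : ℕ → ℕ → ℝ)
    (hadm : IsRelAdmissible act (fun a b : X => dist a b) ν Υ Ω D C N fbd) :
    ∀ T ε : ℝ, 0 < ε → ∀ A : Set (X × ℝ), MeasurableSet A →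
      (∀ p ∈ A, ∀ t' : ℝ, t' ∈ Set.Ioo (T - ε) (T + ε) → (p.1, p.2 + t') ∉ A) →
      ∀ n m : ℕ,
        ∫ p, Set.indicator A (fun _ => (1 : ℝ)) p
            * Set.indicator (Ω n m) (fun _ => (1 : ℝ)) p.1
            * (zetaB act ν Υ n p.1 (Set.Ioo (T - ε) (T + ε))).toReal ∂(ν.prod theta)
          ≤ ∫ p, |Set.indicator A (fun _ => (1 : ℝ)) p -
              Lop act ν Υ Ω n m (fun b t => Set.indicator A (fun _ => (1 : ℝ)) (b, t))
                p.1 p.2| ∂(ν.prod theta) := by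
  
  intro T ε hε A hA hsep n m
  set I : Set ℝ := Set.Ioo (T - ε) (T + ε) with hI
  have hImeas : MeasurableSet I := hI ▸ measurableSet_Ioo
  have hs : ∀ g : G, Measurable (Rlog act ν g) := fun g =>
    Real.measurable_log.comp (ENNReal.measurable_toReal.comp
      ((ν.map (act g⁻¹)).measurable_rnDeriv ν))
  have hΥm : ∀ g : G, Measurable fun p : X × X => Υ n g p.1 p.2 := fun g => hadm.meas_Υ n g
  have hΥb : ∀ (g : G) (b : X), Measurable (Υ n g b) := fun g b =>
    (hΥm g).comp measurable_prodMk_left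
  have hΥ0 : ∀ (g : G) (b b' : X), 0 ≤ Υ n g b b' := hadm.nonneg_Υ n
  have hΩmeas : MeasurableSet (Ω n m) := (hadm.closed_Ω n m).measurableSet
  have hunorm : ∀ (g : G) (b : X), ∫⁻ b', ENNReal.ofReal (Υ n g b b') ∂ν ≤ 1 := fun g b =>
    (ENNReal.le_tsum g).trans_eq (hadm.normalized n b)
  set F : X × ℝ → ℝ≥0∞ := fun x => ∑' g : G,
    ∫⁻ b', Set.indicator (Ω n m) (fun _ => (1:ℝ≥0∞)) x.1 * ENNReal.ofReal (Υ n g x.1 b')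
      * ENNReal.ofReal (Set.indicator A (fun _ => (1:ℝ))
          (x.1, x.2 + Rlog act ν g⁻¹ b' - Rlog act ν g⁻¹ x.1)) ∂ν with hF
  have hind_le : ∀ b : X, Set.indicator (Ω n m) (fun _ => (1:ℝ≥0∞)) b ≤ 1 := fun b => by
    by_cases h : b ∈ Ω n m <;> simp [h]
  have hofA_le : ∀ q : X × ℝ, ENNReal.ofReal (Set.indicator A (fun _ => (1:ℝ)) q) ≤ 1 :=
    fun q => by by_cases h : q ∈ A <;> simp [h]
  have he_le : ∀ (g : G) (x : X × ℝ) (b' : X),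
      Set.indicator (Ω n m) (fun _ => (1:ℝ≥0∞)) x.1 * ENNReal.ofReal (Υ n g x.1 b')
        * ENNReal.ofReal (Set.indicator A (fun _ => (1:ℝ))
            (x.1, x.2 + Rlog act ν g⁻¹ b' - Rlog act ν g⁻¹ x.1))
        ≤ ENNReal.ofReal (Υ n g x.1 b') := by
    intro g x b'
    calc Set.indicator (Ω n m) (fun _ => (1:ℝ≥0∞)) x.1 * ENNReal.ofReal (Υ n g x.1 b')
          * ENNReal.ofReal (Set.indicator A (fun _ => (1:ℝ))
              (x.1, x.2 + Rlog act ν g⁻¹ b' - Rlog act ν g⁻¹ x.1))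
        ≤ 1 * ENNReal.ofReal (Υ n g x.1 b') * 1 :=
          mul_le_mul' (mul_le_mul' (hind_le _) le_rfl) (hofA_le _)
      _ = ENNReal.ofReal (Υ n g x.1 b') := by rw [one_mul, mul_one]
  have hFterm_ne : ∀ (g : G) (x : X × ℝ),
      (∫⁻ b', Set.indicator (Ω n m) (fun _ => (1:ℝ≥0∞)) x.1 * ENNReal.ofReal (Υ n g x.1 b')
        * ENNReal.ofReal (Set.indicator A (fun _ => (1:ℝ))
            (x.1, x.2 + Rlog act ν g⁻¹ b' - Rlog act ν g⁻¹ x.1)) ∂ν) ≠ ⊤ := fun g x =>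
    (((lintegral_mono (he_le g x)).trans (hunorm g x.1)).trans_lt ENNReal.one_lt_top).ne
  have hF_le : ∀ x : X × ℝ, F x ≤ 1 := by
    intro x
    calc F x ≤ ∑' g : G, ∫⁻ b', ENNReal.ofReal (Υ n g x.1 b') ∂ν :=
          ENNReal.tsum_le_tsum fun g => lintegral_mono (he_le g x)
      _ = 1 := hadm.normalized n x.1
  have hF_ne : ∀ x : X × ℝ, F x ≠ ⊤ := fun x => ((hF_le x).trans_lt ENNReal.one_lt_top).ne
  have hFmeas : Measurable F := by
    rw [hF]
    refine Measurable.ennreal_tsum fun g => ?_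
    have hm : Measurable (fun q : (X × ℝ) × X =>
        Set.indicator (Ω n m) (fun _ => (1:ℝ≥0∞)) q.1.1 * ENNReal.ofReal (Υ n g q.1.1 q.2)
          * ENNReal.ofReal (Set.indicator A (fun _ => (1:ℝ))
              (q.1.1, q.1.2 + Rlog act ν g⁻¹ q.2 - Rlog act ν g⁻¹ q.1.1))) := by
      refine Measurable.mul (Measurable.mul ?_ ?_) ?_
      · exact (measurable_one.indicator hΩmeas).comp (measurable_fst.comp measurable_fst)
      · exact ENNReal.measurable_ofReal.comp
          ((hΥm g).comp ((measurable_fst.comp measurable_fst).prodMk measurable_snd))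
      · refine ENNReal.measurable_ofReal.comp ((measurable_one.indicator hA).comp ?_)
        exact (measurable_fst.comp measurable_fst).prodMk
          (((measurable_snd.comp measurable_fst).add ((hs g⁻¹).comp measurable_snd)).sub
            ((hs g⁻¹).comp (measurable_fst.comp measurable_fst)))
    exact hm.lintegral_prod_right'
  have hLF : ∀ x : X × ℝ,
      Lop act ν Υ Ω n m (fun b t => Set.indicator A (fun _ => (1 : ℝ)) (b, t)) x.1 x.2
        = (F x).toReal := by
    intro x
    have hterm : ∀ g : G,
        ∫ b', Set.indicator (Ω n m) (fun _ => (1:ℝ)) x.1 * Υ n g x.1 b'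
            * Set.indicator A (fun _ => (1:ℝ))
                (x.1, x.2 + Rlog act ν g⁻¹ b' - Rlog act ν g⁻¹ x.1) ∂ν
          = (∫⁻ b', Set.indicator (Ω n m) (fun _ => (1:ℝ≥0∞)) x.1
              * ENNReal.ofReal (Υ n g x.1 b')
              * ENNReal.ofReal (Set.indicator A (fun _ => (1:ℝ))
                  (x.1, x.2 + Rlog act ν g⁻¹ b' - Rlog act ν g⁻¹ x.1)) ∂ν).toReal := by
      intro g
      rw [integral_eq_lintegral_of_nonneg_ae]
      · congr 1
        refine lintegral_congr fun b' => ?_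
        rw [ENNReal.ofReal_mul (mul_nonneg (Set.indicator_nonneg (fun _ _ => zero_le_one) _)
              (hΥ0 g x.1 b')),
          ENNReal.ofReal_mul (Set.indicator_nonneg (fun _ _ => zero_le_one) _),
          ofReal_indicator_one']
      · exact Filter.Eventually.of_forall fun b' =>
          mul_nonneg (mul_nonneg (Set.indicator_nonneg (fun _ _ => zero_le_one) _)
            (hΥ0 g x.1 b')) (Set.indicator_nonneg (fun _ _ => zero_le_one) _)
      · exact ((measurable_const.mul (hΥb g x.1)).mul
          ((measurable_one.indicator hA).comp (measurable_const.prodMk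
            (((hs g⁻¹).const_add x.2).sub_const _)))).aestronglyMeasurable
    simp only [Lop, hF]
    rw [ENNReal.tsum_toReal_eq fun g => hFterm_ne g x]
    exact tsum_congr hterm
  have hzeq : ∀ b : X, zetaB act ν Υ n b I =
      ∑' g : G, ∫⁻ b', Set.indicator I (fun _ => (1:ℝ≥0∞))
          (Rlog act ν g⁻¹ b' - Rlog act ν g⁻¹ b) * ENNReal.ofReal (Υ n g b b') ∂ν := by
    intro b
    unfold zetaB
    rw [Measure.sum_apply _ hImeas]
    refine tsum_congr fun g => ?_
    rw [Measure.map_apply ((hs g⁻¹).sub_const _) hImeas,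
      withDensity_apply _ (((hs g⁻¹).sub_const _) hImeas),
      ← lintegral_indicator (((hs g⁻¹).sub_const _) hImeas)]
    refine lintegral_congr fun b' => ?_
    by_cases h : Rlog act ν g⁻¹ b' - Rlog act ν g⁻¹ b ∈ I
    · rw [Set.indicator_of_mem (by exact h), Set.indicator_of_mem h, one_mul]
    · rw [Set.indicator_of_notMem (by exact h), Set.indicator_of_notMem h, zero_mul]
  have hz_le : ∀ b : X, zetaB act ν Υ n b I ≤ 1 := by
    intro b
    rw [hzeq b]
    calc (∑' g : G, ∫⁻ b', Set.indicator I (fun _ => (1:ℝ≥0∞))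
            (Rlog act ν g⁻¹ b' - Rlog act ν g⁻¹ b) * ENNReal.ofReal (Υ n g b b') ∂ν)
        ≤ ∑' g : G, ∫⁻ b', ENNReal.ofReal (Υ n g b b') ∂ν := by
          refine ENNReal.tsum_le_tsum fun g => lintegral_mono fun b' => ?_
          calc Set.indicator I (fun _ => (1:ℝ≥0∞)) (Rlog act ν g⁻¹ b' - Rlog act ν g⁻¹ b)
                * ENNReal.ofReal (Υ n g b b')
              ≤ 1 * ENNReal.ofReal (Υ n g b b') := by
                refine mul_le_mul' ?_ le_rfl
                by_cases h : Rlog act ν g⁻¹ b' - Rlog act ν g⁻¹ b ∈ I <;> simp [h]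
            _ = ENNReal.ofReal (Υ n g b b') := one_mul _
      _ = 1 := hadm.normalized n b
  have hz_ne : ∀ b : X, zetaB act ν Υ n b I ≠ ⊤ := fun b =>
    ((hz_le b).trans_lt ENNReal.one_lt_top).ne
  have key : ∀ x : X × ℝ,
      Set.indicator A (fun _ => (1:ℝ)) x * Set.indicator (Ω n m) (fun _ => (1:ℝ)) x.1
          * (zetaB act ν Υ n x.1 I).toReal
        ≤ |Set.indicator A (fun _ => (1:ℝ)) x - (F x).toReal| := by
    intro x
    by_cases hxA : x ∈ A
    · by_cases hb : x.1 ∈ Ω n m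
      · rw [Set.indicator_of_mem hxA, Set.indicator_of_mem hb, one_mul, one_mul]
        have hsum : F x + zetaB act ν Υ n x.1 I ≤ 1 := by
          rw [hzeq x.1]
          simp only [hF]
          rw [← ENNReal.tsum_add]
          calc (∑' g : G,
                ((∫⁻ b', Set.indicator (Ω n m) (fun _ => (1:ℝ≥0∞)) x.1
                    * ENNReal.ofReal (Υ n g x.1 b')
                    * ENNReal.ofReal (Set.indicator A (fun _ => (1:ℝ))
                        (x.1, x.2 + Rlog act ν g⁻¹ b' - Rlog act ν g⁻¹ x.1)) ∂ν)
                  + ∫⁻ b', Set.indicator I (fun _ => (1:ℝ≥0∞))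
                      (Rlog act ν g⁻¹ b' - Rlog act ν g⁻¹ x.1)
                      * ENNReal.ofReal (Υ n g x.1 b') ∂ν))
              ≤ ∑' g : G, ∫⁻ b', ENNReal.ofReal (Υ n g x.1 b') ∂ν := by
                refine ENNReal.tsum_le_tsum fun g => ?_
                have hm : Measurable (fun b' : X =>
                    Set.indicator (Ω n m) (fun _ => (1:ℝ≥0∞)) x.1
                      * ENNReal.ofReal (Υ n g x.1 b')
                      * ENNReal.ofReal (Set.indicator A (fun _ => (1:ℝ))
                          (x.1, x.2 + Rlog act ν g⁻¹ b' - Rlog act ν g⁻¹ x.1))) :=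
                  (measurable_const.mul
                    (ENNReal.measurable_ofReal.comp (hΥb g x.1))).mul
                    (ENNReal.measurable_ofReal.comp ((measurable_one.indicator hA).comp
                      (measurable_const.prodMk (((hs g⁻¹).const_add x.2).sub_const _))))
                rw [← lintegral_add_left hm]
                refine lintegral_mono fun b' => ?_
                by_cases hd : Rlog act ν g⁻¹ b' - Rlog act ν g⁻¹ x.1 ∈ I
                · have harg : x.2 + Rlog act ν g⁻¹ b' - Rlog act ν g⁻¹ x.1
                      = x.2 + (Rlog act ν g⁻¹ b' - Rlog act ν g⁻¹ x.1) := add_sub_assoc _ _ _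
                  have hnot : (x.1, x.2 + (Rlog act ν g⁻¹ b' - Rlog act ν g⁻¹ x.1)) ∉ A :=
                    hsep x hxA _ hd
                  rw [harg, Set.indicator_of_notMem hnot, Set.indicator_of_mem hd]
                  simp
                · rw [Set.indicator_of_notMem hd, zero_mul, add_zero]
                  exact he_le g x b'
            _ = 1 := hadm.normalized n x.1
        have h1 : (F x).toReal + (zetaB act ν Υ n x.1 I).toReal ≤ 1 := by
          rw [← ENNReal.toReal_add (hF_ne x) (hz_ne x.1)]
          simpa using ENNReal.toReal_mono ENNReal.one_ne_top hsum
        calc (zetaB act ν Υ n x.1 I).toReal ≤ 1 - (F x).toReal := by linarith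
          _ ≤ |1 - (F x).toReal| := le_abs_self _
      · rw [Set.indicator_of_notMem hb, mul_zero, zero_mul]
        exact abs_nonneg _
    · rw [Set.indicator_of_notMem hxA, zero_mul, zero_mul]
      exact abs_nonneg _
  have hGint : Integrable
      (fun x : X × ℝ => |Set.indicator A (fun _ => (1:ℝ)) x - (F x).toReal|) (ν.prod theta) := by
    refine ⟨(((measurable_one.indicator hA).sub hFmeas.ennreal_toReal).abs).aestronglyMeasurable,
      ?_⟩
    refine HasFiniteIntegral.of_bounded (C := 1) (Filter.Eventually.of_forall fun x => ?_)
    have h1 : Set.indicator A (fun _ => (1:ℝ)) x ≤ 1 := by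
      by_cases h : x ∈ A <;> simp [h]
    have h1' : 0 ≤ Set.indicator A (fun _ => (1:ℝ)) x :=
      Set.indicator_nonneg (fun _ _ => zero_le_one) _
    have h2 : (F x).toReal ≤ 1 := by
      simpa using ENNReal.toReal_mono ENNReal.one_ne_top (hF_le x)
    have h3 : (0:ℝ) ≤ (F x).toReal := ENNReal.toReal_nonneg
    rw [Real.norm_eq_abs, abs_abs, abs_sub_le_iff]
    constructor <;> linarith
  calc ∫ p, Set.indicator A (fun _ => (1 : ℝ)) p
        * Set.indicator (Ω n m) (fun _ => (1 : ℝ)) p.1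
        * (zetaB act ν Υ n p.1 I).toReal ∂(ν.prod theta)
      ≤ ∫ p, |Set.indicator A (fun _ => (1:ℝ)) p - (F p).toReal| ∂(ν.prod theta) := by
        refine integral_mono_of_nonneg (Filter.Eventually.of_forall fun x => ?_) hGint
          (Filter.Eventually.of_forall key)
        exact mul_nonneg (mul_nonneg (Set.indicator_nonneg (fun _ _ => zero_le_one) _)
          (Set.indicator_nonneg (fun _ _ => zero_le_one) _)) ENNReal.toReal_nonneg
    _ = ∫ p, |Set.indicator A (fun _ => (1 : ℝ)) p -
          Lop act ν Υ Ω n m (fun b t => Set.indicator A (fun _ => (1 : ℝ)) (b, t))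
            p.1 p.2| ∂(ν.prod theta) := by
        refine integral_congr_ae (Filter.Eventually.of_forall fun x => ?_)
        dsimp only
        rw [hLF x]
end StableRatio
end
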